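/- arXiv:1811.04332 — 7 statements merged into one kernel-verified Lean document; each statement's English description precedes it below -/
import Mathlib

section
/- If a linear map D : ℝ^n → ℝ^n satisfies |det(D)| = (‖D‖_HS/√n)^n and det(D) ≠ 0, then D is a scalar multiple of an orthogonal map (i.e., a homothety composed with an isometry). -/
/-! The hypothesis squares to `det (DᵀD) = (tr (DᵀD) / n)ⁿ`: for the nonnegative eigenvalues of
`DᵀD`, the geometric mean equals the arithmetic mean. By the equality case of AM–GM all
eigenvalues coincide, so the spectral theorem gives `DᵀD = c² • 1`, and `D = c • O` with
`O = c⁻¹ • D` orthogonal (or `D = 0 = 0 • 1`). -/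

open Matrix

open Finset in
theorem Real.eq_sum_div_card_of_prod_eq_pow {ι : Type*} (s : Finset ι) (z : ι → ℝ)
    (hz : ∀ i ∈ s, 0 ≤ z i) (h : ∏ i ∈ s, z i = ((∑ i ∈ s, z i) / #s) ^ #s) :
    ∀ j ∈ s, z j = (∑ i ∈ s, z i) / #s := by
  intro j hj
  have hs : #s ≠ 0 := (card_pos.mpr ⟨j, hj⟩).ne'
  have hmean : ∑ i ∈ s, (#s : ℝ)⁻¹ * z i = (∑ i ∈ s, z i) / #s := by
    rw [← mul_sum, inv_mul_eq_div]
  have hweights : ∑ _i ∈ s, (#s : ℝ)⁻¹ = 1 := by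
    rw [sum_const, nsmul_eq_mul, mul_inv_cancel₀ (by exact_mod_cast hs)]
  have hgeom : ∏ i ∈ s, z i ^ (#s : ℝ)⁻¹ = ∑ i ∈ s, (#s : ℝ)⁻¹ * z i := by
    rw [Real.finsetProd_rpow s z hz, h, hmean,
      Real.pow_rpow_inv_natCast (div_nonneg (sum_nonneg hz) (Nat.cast_nonneg _)) hs]
  rw [← hmean]
  exact (Real.geom_mean_eq_arith_mean_weighted_iff_of_pos' s _ z (fun _ _ ↦ by positivity)
    hweights hz).mp hgeom j hj

namespace Matrix

variable {𝕜 n : Type*} [RCLike 𝕜] [Fintype n] [DecidableEq n]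

theorem IsHermitian.eq_smul_one_of_eigenvalues_eq {A : Matrix n n 𝕜} (hA : A.IsHermitian)
    {c : ℝ} (h : ∀ i, hA.eigenvalues i = c) : A = (c : 𝕜) • 1 := by
  have hdiag : diagonal (RCLike.ofReal ∘ hA.eigenvalues) = (c : 𝕜) • (1 : Matrix n n 𝕜) := by
    rw [smul_one_eq_diagonal]; congr 1; ext i; simp [h]
  rw [hA.spectral_theorem, hdiag, map_smul, map_one]

open scoped ComplexOrder in
theorem PosSemidef.eq_smul_one_of_det_eq_pow {A : Matrix n n 𝕜} (hA : A.PosSemidef)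
    (h : A.det = (A.trace / Fintype.card n) ^ Fintype.card n) :
    A = (A.trace / Fintype.card n) • 1 := by
  let μ := hA.isHermitian.eigenvalues
  have hmean : A.trace / Fintype.card n = (((∑ i, μ i) / Fintype.card n : ℝ) : 𝕜) := by
    rw [hA.isHermitian.trace_eq_sum_eigenvalues]; push_cast; rfl
  have hprod : ∏ i, μ i = ((∑ i, μ i) / Fintype.card n) ^ Fintype.card n := by
    rw [hA.isHermitian.det_eq_prod_eigenvalues, hmean] at h
    exact_mod_cast h
  rw [hmean]
  exact hA.isHermitian.eq_smul_one_of_eigenvalues_eq fun j ↦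
    Real.eq_sum_div_card_of_prod_eq_pow Finset.univ μ (fun i _ ↦ hA.eigenvalues_nonneg i) hprod j
      (Finset.mem_univ j)

theorem exists_orthogonal_smul_of_transpose_mul_self_eq {D : Matrix n n ℝ} {c : ℝ}
    (h : Dᵀ * D = c ^ 2 • 1) : ∃ O : Matrix n n ℝ, O * Oᵀ = 1 ∧ D = c • O := by
  rcases eq_or_ne c 0 with rfl | hc
  · have hD : D = 0 := conjTranspose_mul_self_eq_zero.mp (by simpa using h)
    exact ⟨1, by simp, by simp [hD]⟩
  refine ⟨c⁻¹ • D, mul_eq_one_comm.mp ?_, by rw [smul_smul, mul_inv_cancel₀ hc, one_smul]⟩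
  rw [transpose_smul, smul_mul, Matrix.mul_smul, h, smul_smul, smul_smul,
    show c⁻¹ * c⁻¹ * c ^ 2 = 1 by field_simp, one_smul]

end Matrix

theorem eq_hadamard_implies_homothety_general {n : ℕ} (D : Matrix (Fin n) (Fin n) ℝ)
    (heq : |D.det| = (Real.sqrt (Dᵀ * D).trace / Real.sqrt n) ^ n) :
    ∃ (c : ℝ) (O : Matrix (Fin n) (Fin n) ℝ), O * Oᵀ = 1 ∧ D = c • O := by
  set T := (Dᵀ * D).trace
  have hA : (Dᵀ * D).PosSemidef := by simpa using posSemidef_conjTranspose_mul_self D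
  have hdet : (Dᵀ * D).det = (T / Fintype.card (Fin n)) ^ Fintype.card (Fin n) := by
    rw [det_mul, det_transpose, ← sq, ← sq_abs, heq, ← pow_mul, mul_comm, pow_mul, div_pow,
      Real.sq_sqrt hA.trace_nonneg, Real.sq_sqrt n.cast_nonneg, Fintype.card_fin]
  have hscalar : Dᵀ * D = Real.sqrt (T / n) ^ 2 • 1 := by
    rw [Real.sq_sqrt (div_nonneg hA.trace_nonneg n.cast_nonneg)]
    simpa using hA.eq_smul_one_of_det_eq_pow hdet
  obtain ⟨O, hO, hD⟩ := exists_orthogonal_smul_of_transpose_mul_self_eq hscalar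
  exact ⟨_, O, hO, hD⟩

/-- Equality case in Hadamard's inequality: if `|det D| = (‖D‖_HS/√n)^n` and
`det D ≠ 0`, then `D` is a scalar multiple of an orthogonal matrix. -/
theorem eq_hadamard_implies_homothety {n : ℕ} (D : Matrix (Fin n) (Fin n) ℝ)
    (heq : |D.det| = (Real.sqrt (Dᵀ * D).trace / Real.sqrt n) ^ n)
    (hdet : D.det ≠ 0) :
    ∃ (c : ℝ) (O : Matrix (Fin n) (Fin n) ℝ), O * Oᵀ = 1 ∧ D = c • O :=
  eq_hadamard_implies_homothety_general D heq
end

section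
/- The John ellipsoid is unique: if (Y, ‖·‖) is an n-dimensional normed space and E₁, E₂ are two ellipsoids (unit balls of inner product norms) contained in the unit ball of Y, both of maximal volume, then E₁ = E₂. -/
open Matrix MeasureTheory
open scoped MatrixOrder

/-!
An ellipsoid `{y | yᵀ A y ≤ 1}` is the image `T '' B` of the Euclidean unit ball `B` under the
positive definite matrix `T = A ^ (-1/2)`, and `vol (T '' B) = det T · vol B`. If `T₁ '' B` and
`T₂ '' B` are ellipsoids of maximal volume inside a convex set `K`, then `det T₁ = det T₂`, and
`((T₁ + T₂) / 2) '' B ⊆ K` by convexity, so `det ((T₁ + T₂) / 2) ≤ det T₁`. Strict log-concavity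
of the determinant on positive definite matrices forces `T₁ = T₂`: after the congruence by
`T₁ ^ (-1/2)` it is the AM-GM inequality `√λ ≤ (1 + λ) / 2` for the eigenvalues `λ` of
`T₁ ^ (-1/2) T₂ T₁ ^ (-1/2)`, with equality only at `λ = 1`.
-/

theorem Finset.eq_one_of_prod_eq_one_of_prod_half_one_add_le_one {ι : Type*} {s : Finset ι}
    {f : ι → ℝ} (hf : ∀ i ∈ s, 0 < f i) (hprod : ∏ i ∈ s, f i = 1)
    (hmid : ∏ i ∈ s, (1 + f i) / 2 ≤ 1) : ∀ i ∈ s, f i = 1 := by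
  by_contra! ⟨j, hj, hfj⟩
  have hlt : ∏ i ∈ s, f i < ∏ i ∈ s, ((1 + f i) / 2) ^ 2 :=
    Finset.prod_lt_prod hf (fun i _ ↦ by nlinarith [sq_nonneg (f i - 1)])
      ⟨j, hj, by nlinarith [sq_pos_of_ne_zero (sub_ne_zero.mpr hfj)]⟩
  have hnonneg : 0 ≤ ∏ i ∈ s, (1 + f i) / 2 :=
    Finset.prod_nonneg fun i hi ↦ by linarith [hf i hi]
  rw [Finset.prod_pow, hprod] at hlt
  nlinarith

theorem convex_setOf_le_one {E : Type*} [AddCommGroup E] [Module ℝ E] {N : E → ℝ}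
    (hNs : ∀ (c : ℝ) (y : E), N (c • y) = |c| * N y) (hNt : ∀ x y, N (x + y) ≤ N x + N y) :
    Convex ℝ {y | N y ≤ 1} := by
  intro x hx y hy a b ha hb hab
  calc N (a • x + b • y) ≤ N (a • x) + N (b • y) := hNt _ _
    _ = a * N x + b * N y := by rw [hNs, hNs, abs_of_nonneg ha, abs_of_nonneg hb]
    _ ≤ a * 1 + b * 1 := by gcongr <;> assumption
    _ = 1 := by rw [mul_one, mul_one, hab]

theorem Convex.image_smul_add_smul_subset {E F : Type*} [AddCommGroup E] [Module ℝ E]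
    [AddCommGroup F] [Module ℝ F] {K : Set F} (hK : Convex ℝ K) {f g : E →ₗ[ℝ] F} {s : Set E}
    (hf : f '' s ⊆ K) (hg : g '' s ⊆ K) {a b : ℝ} (ha : 0 ≤ a) (hb : 0 ≤ b) (hab : a + b = 1) :
    (a • f + b • g) '' s ⊆ K := by
  rintro _ ⟨x, hx, rfl⟩
  exact hK (hf ⟨x, hx, rfl⟩) (hg ⟨x, hx, rfl⟩) ha hb hab

variable {ι : Type*} [Fintype ι]

namespace Matrix

variable [DecidableEq ι]

theorem IsHermitian.det_one_add {D : Matrix ι ι ℝ} (hD : D.IsHermitian) :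
    det (1 + D) = ∏ i, (1 + hD.eigenvalues i) := by
  conv_lhs => rw [hD.spectral_theorem,
    ← map_one (Unitary.conjStarAlgAut ℝ _ hD.eigenvectorUnitary), ← map_add]
  simp only [← diagonal_one, RCLike.ofReal_real_eq_id, CompTriple.comp_eq, diagonal_add, det_map,
    det_diagonal]

theorem IsHermitian.eq_one_of_eigenvalues_eq_one {D : Matrix ι ι ℝ} (hD : D.IsHermitian)
    (h : hD.eigenvalues = 1) : D = 1 := by
  rw [hD.spectral_theorem, h]
  simp [-Unitary.conjStarAlgAut_apply]

theorem IsHermitian.posDef_mul_self {S : Matrix ι ι ℝ} (hS : S.IsHermitian) (hSu : IsUnit S) :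
    (S * S).PosDef := by
  have := hSu.posDef_star_right_conjugate_iff.mpr PosDef.one
  rwa [mul_one, star_eq_conjTranspose, hS.eq] at this

theorem PosDef.eq_one_of_det_eq_one_of_det_midpoint_le {D : Matrix ι ι ℝ} (hD : D.PosDef)
    (hdet : det D = 1) (hmid : det ((2⁻¹ : ℝ) • (1 + D)) ≤ 1) : D = 1 := by
  refine hD.isHermitian.eq_one_of_eigenvalues_eq_one (funext fun i ↦ ?_)
  refine Finset.eq_one_of_prod_eq_one_of_prod_half_one_add_le_one
    (fun i _ ↦ hD.eigenvalues_pos i) ?_ ?_ i (Finset.mem_univ i)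
  · simpa [hD.isHermitian.det_eq_prod_eigenvalues] using hdet
  · rw [det_smul, hD.isHermitian.det_one_add, inv_pow, ← div_eq_inv_mul] at hmid
    simpa [Finset.prod_div_distrib] using hmid

theorem PosDef.eq_of_det_eq_of_det_midpoint_le {P Q : Matrix ι ι ℝ} (hP : P.PosDef)
    (hQ : Q.PosDef) (hdet : det Q = det P) (hmid : det ((2⁻¹ : ℝ) • (P + Q)) ≤ det P) :
    P = Q := by
  set R := CFC.sqrt P
  have hR : R.PosDef := (IsStrictlyPositive.sqrt P hP.isStrictlyPositive).posDef
  have hRR : R * R = P := CFC.sqrt_mul_sqrt_self P hP.posSemidef.nonneg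
  have hRdet : det R * det R = det P := by rw [← det_mul, hRR]
  have hRu : IsUnit (det R) := hR.det_pos.ne'.isUnit
  set D := R⁻¹ * Q * R⁻¹
  have hQ_eq : Q = R * D * R := by
    rw [← mul_assoc, mul_nonsing_inv_cancel_left _ _ hRu, nonsing_inv_mul_cancel_right _ _ hRu]
  have hD : D.PosDef := by
    have := (isUnit_nonsing_inv_iff.mpr hR.isUnit).posDef_star_right_conjugate_iff.mpr hQ
    rwa [star_eq_conjTranspose, hR.inv.isHermitian.eq] at this
  have hDdet : det D = 1 := by
    rw [hQ_eq, det_mul, det_mul, mul_right_comm, hRdet] at hdet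
    exact (mul_eq_left₀ hP.det_pos.ne').mp hdet
  have hmid_eq : (2⁻¹ : ℝ) • (P + Q) = R * ((2⁻¹ : ℝ) • (1 + D)) * R := by
    rw [hQ_eq, ← hRR]
    simp only [Matrix.mul_smul, Matrix.smul_mul, mul_add, add_mul, mul_one]
  rw [hmid_eq, det_mul, det_mul, mul_right_comm, hRdet] at hmid
  have hD_one : D = 1 := hD.eq_one_of_det_eq_one_of_det_midpoint_le hDdet
    ((mul_le_iff_le_one_right hP.det_pos).mp hmid)
  rw [hQ_eq, hD_one, mul_one, hRR]

end Matrix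

def ellipsoid (A : Matrix ι ι ℝ) : Set (ι → ℝ) := {y | y ⬝ᵥ A *ᵥ y ≤ 1}

theorem mem_ellipsoid {A : Matrix ι ι ℝ} {y : ι → ℝ} : y ∈ ellipsoid A ↔ y ⬝ᵥ A *ᵥ y ≤ 1 :=
  Iff.rfl

theorem ellipsoid_transpose_mul_mul (A S : Matrix ι ι ℝ) :
    ellipsoid (Sᵀ * A * S) = (S *ᵥ ·) ⁻¹' ellipsoid A := by
  ext y
  simp only [Set.mem_preimage, mem_ellipsoid, ← mulVec_mulVec, dotProduct_mulVec,
    vecMul_transpose]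

variable [DecidableEq ι]

theorem ellipsoid_one_eq_preimage_closedBall :
    ellipsoid (1 : Matrix ι ι ℝ) =
      WithLp.toLp 2 ⁻¹' Metric.closedBall (0 : EuclideanSpace ℝ ι) 1 := by
  ext x
  simp only [mem_ellipsoid, one_mulVec, Set.mem_preimage, mem_closedBall_zero_iff]
  rw [← sq_le_one_iff₀ (norm_nonneg _), EuclideanSpace.norm_sq_eq]
  simp [dotProduct, sq]

theorem volume_ellipsoid_one : volume (ellipsoid (1 : Matrix ι ι ℝ)) =
    volume (Metric.closedBall (0 : EuclideanSpace ℝ ι) 1) := by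
  rw [ellipsoid_one_eq_preimage_closedBall,
    (PiLp.volume_preserving_toLp ι).measure_preimage measurableSet_closedBall.nullMeasurableSet]

theorem volume_image_ellipsoid_one_le_iff {T T' : Matrix ι ι ℝ} :
    volume (toLin' T '' ellipsoid 1) ≤ volume (toLin' T' '' ellipsoid 1) ↔
      |det T| ≤ |det T'| := by
  rw [Measure.addHaar_image_linearMap, Measure.addHaar_image_linearMap, LinearMap.det_toLin',
    LinearMap.det_toLin', volume_ellipsoid_one,
    ENNReal.mul_le_mul_iff_left (Metric.measure_closedBall_pos _ _ one_pos).ne'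
      measure_closedBall_lt_top.ne, ENNReal.ofReal_le_ofReal_iff (abs_nonneg _)]

theorem Matrix.PosDef.ellipsoid_inv_mul_inv {T : Matrix ι ι ℝ} (hT : T.PosDef) :
    ellipsoid (T⁻¹ * T⁻¹) = toLin' T '' ellipsoid 1 := by
  have hTu : IsUnit (det T) := hT.det_pos.ne'.isUnit
  have hsymm : T⁻¹ * T⁻¹ = (T⁻¹)ᵀ * 1 * T⁻¹ := by
    rw [← conjTranspose_eq_transpose_of_trivial, hT.inv.isHermitian.eq, mul_one]
  rw [hsymm, ellipsoid_transpose_mul_mul]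
  ext y
  simp only [Set.mem_preimage, Set.mem_image, toLin'_apply]
  refine ⟨fun hy ↦ ⟨T⁻¹ *ᵥ y, hy, ?_⟩, ?_⟩
  · rw [mulVec_mulVec, mul_nonsing_inv _ hTu, one_mulVec]
  · rintro ⟨x, hx, rfl⟩
    rwa [mulVec_mulVec, nonsing_inv_mul _ hTu, one_mulVec]

theorem Matrix.PosDef.exists_posDef_ellipsoid_eq_image {A : Matrix ι ι ℝ} (hA : A.PosDef) :
    ∃ T : Matrix ι ι ℝ, T.PosDef ∧ ellipsoid A = toLin' T '' ellipsoid 1 := by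
  have hS : (CFC.sqrt A).PosDef := (IsStrictlyPositive.sqrt A hA.isStrictlyPositive).posDef
  refine ⟨(CFC.sqrt A)⁻¹, hS.inv, ?_⟩
  rw [← hS.inv.ellipsoid_inv_mul_inv, nonsing_inv_nonsing_inv _ hS.det_pos.ne'.isUnit,
    CFC.sqrt_mul_sqrt_self A hA.posSemidef.nonneg]

theorem Convex.ellipsoid_eq_of_volume_maximal {K : Set (ι → ℝ)} (hK : Convex ℝ K)
    {A₁ A₂ : Matrix ι ι ℝ} (hA₁ : A₁.PosDef) (hA₂ : A₂.PosDef)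
    (hsub₁ : ellipsoid A₁ ⊆ K) (hsub₂ : ellipsoid A₂ ⊆ K)
    (hmax₁ : ∀ B : Matrix ι ι ℝ, B.PosDef → ellipsoid B ⊆ K →
      volume (ellipsoid B) ≤ volume (ellipsoid A₁))
    (hmax₂ : ∀ B : Matrix ι ι ℝ, B.PosDef → ellipsoid B ⊆ K →
      volume (ellipsoid B) ≤ volume (ellipsoid A₂)) :
    ellipsoid A₁ = ellipsoid A₂ := by
  obtain ⟨T₁, hT₁, hE₁⟩ := hA₁.exists_posDef_ellipsoid_eq_image
  obtain ⟨T₂, hT₂, hE₂⟩ := hA₂.exists_posDef_ellipsoid_eq_image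
  set M := (2⁻¹ : ℝ) • (T₁ + T₂)
  have hM : M.PosDef := (hT₁.add hT₂).smul (by norm_num)
  have hEM := hM.ellipsoid_inv_mul_inv
  have hMK : ellipsoid (M⁻¹ * M⁻¹) ⊆ K := by
    rw [hEM, show toLin' M = (2⁻¹ : ℝ) • toLin' T₁ + (2⁻¹ : ℝ) • toLin' T₂ by simp [M]]
    exact hK.image_smul_add_smul_subset (hE₁ ▸ hsub₁) (hE₂ ▸ hsub₂) (by norm_num) (by norm_num)
      (by norm_num)
  have hdet_le {S T : Matrix ι ι ℝ} (hS : S.PosDef) (hT : T.PosDef)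
      (h : volume (toLin' S '' ellipsoid 1) ≤ volume (toLin' T '' ellipsoid 1)) :
      det S ≤ det T := by
    rwa [volume_image_ellipsoid_one_le_iff, abs_of_pos hS.det_pos, abs_of_pos hT.det_pos] at h
  have hdet : det T₂ = det T₁ := le_antisymm
    (hdet_le hT₂ hT₁ (hE₁ ▸ hE₂ ▸ hmax₁ A₂ hA₂ hsub₂))
    (hdet_le hT₁ hT₂ (hE₁ ▸ hE₂ ▸ hmax₂ A₁ hA₁ hsub₁))
  have hdetM : det M ≤ det T₁ :=
    hdet_le hM hT₁ (hEM ▸ hE₁ ▸ hmax₁ _ (hM.inv.isHermitian.posDef_mul_self hM.inv.isUnit) hMK)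
  rw [hE₁, hE₂, hT₁.eq_of_det_eq_of_det_midpoint_le hT₂ hdet hdetM]

theorem john_ellipsoid_unique_general {n : ℕ} (N : (Fin n → ℝ) → ℝ)
    (hNs : ∀ (c : ℝ) (y), N (c • y) = |c| * N y)
    (hNt : ∀ x y, N (x + y) ≤ N x + N y)
    (A₁ A₂ : Matrix (Fin n) (Fin n) ℝ)
    (hA₁ : A₁.PosDef) (hA₂ : A₂.PosDef)
    (hsub₁ : {y : Fin n → ℝ | y ⬝ᵥ A₁ *ᵥ y ≤ 1} ⊆ {y | N y ≤ 1})
    (hsub₂ : {y : Fin n → ℝ | y ⬝ᵥ A₂ *ᵥ y ≤ 1} ⊆ {y | N y ≤ 1})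
    (hmax₁ : ∀ B : Matrix (Fin n) (Fin n) ℝ, B.PosDef → B.IsSymm →
      {y : Fin n → ℝ | y ⬝ᵥ B *ᵥ y ≤ 1} ⊆ {y | N y ≤ 1} →
      volume {y : Fin n → ℝ | y ⬝ᵥ B *ᵥ y ≤ 1} ≤
        volume {y : Fin n → ℝ | y ⬝ᵥ A₁ *ᵥ y ≤ 1})
    (hmax₂ : ∀ B : Matrix (Fin n) (Fin n) ℝ, B.PosDef → B.IsSymm →
      {y : Fin n → ℝ | y ⬝ᵥ B *ᵥ y ≤ 1} ⊆ {y | N y ≤ 1} →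
      volume {y : Fin n → ℝ | y ⬝ᵥ B *ᵥ y ≤ 1} ≤
        volume {y : Fin n → ℝ | y ⬝ᵥ A₂ *ᵥ y ≤ 1}) :
    {y : Fin n → ℝ | y ⬝ᵥ A₁ *ᵥ y ≤ 1} = {y : Fin n → ℝ | y ⬝ᵥ A₂ *ᵥ y ≤ 1} :=
  -- over `ℝ`, `IsHermitian` unfolds to `IsSymm`
  (convex_setOf_le_one hNs hNt).ellipsoid_eq_of_volume_maximal hA₁ hA₂ hsub₁ hsub₂
    (fun B hB ↦ hmax₁ B hB hB.isHermitian) (fun B hB ↦ hmax₂ B hB hB.isHermitian)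

/-- Uniqueness of the John ellipsoid: if two ellipsoids (unit balls of inner
product norms) contained in the unit ball of a norm `N` on `ℝ^n` both have
maximal volume among such ellipsoids, then they coincide. -/
theorem john_ellipsoid_unique {n : ℕ} (N : (Fin n → ℝ) → ℝ)
    (hN0 : ∀ y, N y = 0 ↔ y = 0)
    (hNs : ∀ (c : ℝ) (y), N (c • y) = |c| * N y)
    (hNt : ∀ x y, N (x + y) ≤ N x + N y)
    (A₁ A₂ : Matrix (Fin n) (Fin n) ℝ)
    (hA₁ : A₁.PosDef) (hA₁s : A₁.IsSymm) (hA₂ : A₂.PosDef) (hA₂s : A₂.IsSymm)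
    (hsub₁ : {y : Fin n → ℝ | y ⬝ᵥ A₁ *ᵥ y ≤ 1} ⊆ {y | N y ≤ 1})
    (hsub₂ : {y : Fin n → ℝ | y ⬝ᵥ A₂ *ᵥ y ≤ 1} ⊆ {y | N y ≤ 1})
    (hmax₁ : ∀ B : Matrix (Fin n) (Fin n) ℝ, B.PosDef → B.IsSymm →
      {y : Fin n → ℝ | y ⬝ᵥ B *ᵥ y ≤ 1} ⊆ {y | N y ≤ 1} →
      volume {y : Fin n → ℝ | y ⬝ᵥ B *ᵥ y ≤ 1} ≤
        volume {y : Fin n → ℝ | y ⬝ᵥ A₁ *ᵥ y ≤ 1})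
    (hmax₂ : ∀ B : Matrix (Fin n) (Fin n) ℝ, B.PosDef → B.IsSymm →
      {y : Fin n → ℝ | y ⬝ᵥ B *ᵥ y ≤ 1} ⊆ {y | N y ≤ 1} →
      volume {y : Fin n → ℝ | y ⬝ᵥ B *ᵥ y ≤ 1} ≤
        volume {y : Fin n → ℝ | y ⬝ᵥ A₂ *ᵥ y ≤ 1}) :
    {y : Fin n → ℝ | y ⬝ᵥ A₁ *ᵥ y ≤ 1} = {y : Fin n → ℝ | y ⬝ᵥ A₂ *ᵥ y ≤ 1} :=
  john_ellipsoid_unique_general N hNs hNt A₁ A₂ hA₁ hA₂ hsub₁ hsub₂ hmax₁ hmax₂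
end

section
/- Let h₀ be a positive definite quadratic form on ℝ^n, l a linear form, and suppose ‖l‖²_{h₀*} = c·n for some c > 1, where ‖·‖_{h₀*} is the dual norm. Define h_ε = (1−ε)h₀ + ε l². Then for all sufficiently small ε > 0, det(h_ε) > det(h₀), where the determinants are taken with respect to a fixed basis. -/
open Matrix

private lemma det_one_add_row_mul_col {ι : Type*} [Unique ι] {n : ℕ}
    (B : Matrix (Fin n) (Fin n) ℝ) (u w : Fin n → ℝ) :
    (1 + replicateRow ι u * B * replicateCol ι w).det = 1 + u ⬝ᵥ B *ᵥ w := by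
  rw [det_unique, Matrix.add_apply, Matrix.one_apply_eq]
  congr 1
  simp only [Matrix.mul_apply, mulVec, dotProduct, Matrix.replicateRow_apply, Matrix.replicateCol_apply,
    Finset.mul_sum, Finset.sum_mul]
  rw [Finset.sum_comm]
  apply Finset.sum_congr rfl; intro i _
  apply Finset.sum_congr rfl; intro j _
  ring

/-- Variational step in John's theorem: if `h₀` is positive definite on `ℝ^n`
and `l(x) = u ⬝ x` is a linear form whose `h₀`-dual norm squared
`u ⬝ h₀⁻¹ u` equals `c·n` with `c > 1`, then the form
`h_ε = (1−ε) h₀ + ε l²` has strictly larger determinant than `h₀` for all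
sufficiently small `ε > 0`. -/
theorem john_variational_step {n : ℕ} (hn : 0 < n)
    (h₀ : Matrix (Fin n) (Fin n) ℝ) (hpd : h₀.PosDef) (hsymm : h₀.IsSymm)
    (u : Fin n → ℝ) (c : ℝ) (hc : 1 < c)
    (hdual : u ⬝ᵥ h₀⁻¹ *ᵥ u = c * n) :
    ∃ ε₀ > (0 : ℝ), ∀ ε : ℝ, 0 < ε → ε < ε₀ →
      h₀.det < ((1 - ε) • h₀ + ε • vecMulVec u u).det := by
  have hdet : 0 < h₀.det := hpd.det_pos
  have hn1 : (1:ℝ) ≤ n := by exact_mod_cast hn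
  have hcpos : (0:ℝ) < c := lt_trans one_pos hc
  have hcn : (1:ℝ) < c * n := by nlinarith [mul_le_mul_of_nonneg_left hn1 hcpos.le]
  have hden : 0 < ((n:ℝ)-1)*(c*n-1)+1 := by
    nlinarith [mul_nonneg (sub_nonneg.mpr hn1) (sub_pos.mpr hcn).le]
  refine ⟨min (1/2) ((c-1)*n / (((n:ℝ)-1)*(c*n-1)+1)), lt_min (by norm_num)
    (div_pos (by nlinarith) hden), ?_⟩
  intro ε hε hεlt
  have hε2 : ε < 1/2 := lt_of_lt_of_le hεlt (min_le_left _ _)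
  have hεb : ε * (((n:ℝ)-1)*(c*n-1)+1) < (c-1)*n := by
    have := lt_of_lt_of_le hεlt (min_le_right _ _)
    exact (lt_div_iff₀ hden).mp this
  have h1ε : (0:ℝ) < 1 - ε := by linarith
  -- rewrite the matrix
  have hfac : (1 - ε) • h₀ + ε • vecMulVec u u
      = (1 - ε) • (h₀ + (ε/(1-ε)) • vecMulVec u u) := by
    rw [smul_add, smul_smul]
    congr 2
    field_simp
  have hvmv : (ε/(1-ε)) • vecMulVec u u = replicateCol (Fin 1) ((ε/(1-ε)) • u) * replicateRow (Fin 1) u := by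
    erw [← vecMulVec_eq (ι := Fin 1)]
    ext i j
    simp [vecMulVec, smul_eq_mul, mul_assoc]
  have hunit : IsUnit h₀.det := hdet.ne'.isUnit
  have hkey : (h₀ + (ε/(1-ε)) • vecMulVec u u).det
      = h₀.det * (1 + (ε/(1-ε)) * (c*n)) := by
    rw [hvmv]; erw [det_add_replicateCol_mul_replicateRow (ι := Fin 1) hunit]
    rw [det_one_add_row_mul_col]
    rw [mulVec_smul, dotProduct_smul, hdual, smul_eq_mul]
  rw [hfac, det_smul, Fintype.card_fin, hkey]
  -- now pure real inequality
  have hb : 1 - ((n:ℝ)-1)*ε ≤ (1-ε)^(n-1) := by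
    have := one_add_mul_le_pow (a := -ε) (by linarith) (n-1)
    have hcast : ((n-1:ℕ):ℝ) = (n:ℝ) - 1 := by
      push_cast [Nat.cast_sub hn]; ring
    calc 1 - ((n:ℝ)-1)*ε = 1 + ((n-1:ℕ):ℝ) * (-ε) := by rw [hcast]; ring
    _ ≤ (1 + -ε)^(n-1) := this
    _ = (1-ε)^(n-1) := by ring_nf
  have hpow : (1-ε)^n = (1-ε)^(n-1) * (1-ε) := by
    rw [← pow_succ, Nat.sub_add_cancel hn]
  have hmulpos : 0 < 1 + ε/(1-ε) * (c*n) := by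
    have h4 : 0 < ε/(1-ε) := div_pos hε h1ε
    nlinarith [mul_pos h4 (lt_trans one_pos hcn)]
  rw [hpow]
  have key : 1 < (1-ε)^(n-1) * ((1-ε) + ε * (c*n)) := by
    have h2 : (1 - ((n:ℝ)-1)*ε) * ((1-ε) + ε*(c*n)) ≤ (1-ε)^(n-1) * ((1-ε) + ε*(c*n)) := by
      apply mul_le_mul_of_nonneg_right hb
      nlinarith [mul_pos hε (lt_trans one_pos hcn)]
    have h3 : 1 < (1 - ((n:ℝ)-1)*ε) * ((1-ε) + ε*(c*n)) := by nlinarith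
    linarith
  have heq : (1-ε)^(n-1) * (1-ε) * (h₀.det * (1 + ε/(1-ε) * (c*n)))
      = h₀.det * ((1-ε)^(n-1) * ((1-ε) + ε * (c*n))) := by
    field_simp
  rw [heq]
  nlinarith
end

section
/- Let X be a Riemannian n-manifold (or more simply, take X = ℝ^n with a Riemannian metric g), P ⊆ X a compact domain with 2n closed 'faces' ±Qᵢ ⊆ ∂P with dist(Qᵢ, −Qᵢ) ≥ λᵢ, and suppose there is a smooth map F : P → [0,1]^n sending ±Qᵢ into the corresponding faces of the cube which has nonzero degree (so F is surjective onto the cube and almost every point has nonempty preimage). Then vol_n(P) ≥ ∏ᵢ λᵢ. -/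
/-!
Straighten `P` by `x ↦ (min (λᵢ, dist (x, -Qᵢ)))ᵢ`. This map is onto the box `∏ᵢ [0, λᵢ]` by the
degree hypothesis, and its coordinates are 1-Lipschitz. By Rademacher it is differentiable a.e.,
and by Hadamard's inequality, applied to the rows of its derivative, its Jacobian is at most `1`
in absolute value; the area formula then gives `∏ᵢ λᵢ ≤ vol (image of P) ≤ vol P`.
-/

open MeasureTheory Module
open scoped NNReal ENNReal InnerProductSpace

section AddHaar

variable {E : Type*} [NormedAddCommGroup E] [NormedSpace ℝ E] [FiniteDimensional ℝ E]
  [MeasurableSpace E] [BorelSpace E] (μ : Measure E) [μ.IsAddHaarMeasure]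

theorem LipschitzWith.addHaar_image_eq_zero {K : ℝ≥0} {f : E → E} (hf : LipschitzWith K f)
    {s : Set E} (hs : μ s = 0) : μ (f '' s) = 0 := by
  -- `μ` and `μH[finrank ℝ E]` are both Haar measures, so they have the same null sets.
  have hH : μH[finrank ℝ E] s = 0 :=
    Measure.absolutelyContinuous_isAddHaarMeasure μH[finrank ℝ E] μ hs
  refine Measure.absolutelyContinuous_isAddHaarMeasure μ μH[finrank ℝ E] ?_
  exact le_antisymm ((hf.hausdorffMeasure_image_le (Nat.cast_nonneg _) s).trans_eq
    (by rw [hH, mul_zero])) zero_le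

theorem LipschitzWith.addHaar_image_le_lintegral_abs_det_fderiv {K : ℝ≥0} {f : E → E}
    (hf : LipschitzWith K f) {s : Set E} (hs : MeasurableSet s) :
    μ (f '' s) ≤ ∫⁻ x in s, ENNReal.ofReal |(fderiv ℝ f x).det| ∂μ := by
  set D := {x | DifferentiableAt ℝ f x}
  have hsD : MeasurableSet (s ∩ D) := hs.inter (measurableSet_of_differentiableAt ℝ f)
  have hnull : μ (f '' (s \ D)) = 0 :=
    hf.addHaar_image_eq_zero μ (measure_mono_null (fun x hx => hx.2)
      (ae_iff.mp (hf.ae_differentiableAt (μ := μ))))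
  calc μ (f '' s) = μ (f '' (s ∩ D) ∪ f '' (s \ D)) := by
        rw [← Set.image_union, Set.inter_union_sdiff]
    _ ≤ μ (f '' (s ∩ D)) := (measure_union_le _ _).trans_eq (by rw [hnull, add_zero])
    _ ≤ ∫⁻ x in s ∩ D, ENNReal.ofReal |(fderiv ℝ f x).det| ∂μ :=
        MeasureTheory.addHaar_image_le_lintegral_abs_det_fderiv μ hsD
          fun x hx => hx.2.hasFDerivAt.hasFDerivWithinAt
    _ ≤ ∫⁻ x in s, ENNReal.ofReal |(fderiv ℝ f x).det| ∂μ :=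
        lintegral_mono_set Set.inter_subset_left

end AddHaar

section InnerProductSpace

variable {V : Type*} [NormedAddCommGroup V] [InnerProductSpace ℝ V]
  {ι : Type*} [Fintype ι]

theorem OrthonormalBasis.abs_det_le_prod_norm [DecidableEq ι] (b : OrthonormalBasis ι ℝ V)
    (v : ι → V) : |b.toBasis.det v| ≤ ∏ i, ‖v i‖ := by
  let e := Fintype.equivFin ι
  have : Fact (finrank ℝ V = Fintype.card ι) := ⟨finrank_eq_card_basis b.toBasis⟩
  have h := (b.reindex e).toBasis.orientation.abs_volumeForm_apply_le (v ∘ e.symm)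
  rw [Orientation.volumeForm_robust' _ (b.reindex e)] at h
  simpa [OrthonormalBasis.reindex_toBasis, Module.Basis.det_reindex, Function.comp_assoc,
    e.symm.prod_comp fun i => ‖v i‖] using h

theorem LinearMap.det_adjoint {𝕜 : Type*} [RCLike 𝕜] {W : Type*} [NormedAddCommGroup W]
    [InnerProductSpace 𝕜 W] [FiniteDimensional 𝕜 W] (f : W →ₗ[𝕜] W) :
    (LinearMap.adjoint f).det = star f.det := by
  let b := stdOrthonormalBasis 𝕜 W
  rw [← LinearMap.det_toMatrix b.toBasis, LinearMap.toMatrix_adjoint b b, Matrix.det_conjTranspose,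
    LinearMap.det_toMatrix]

theorem ContinuousLinearMap.abs_det_le_prod_norm_innerSL_comp [FiniteDimensional ℝ V]
    (b : OrthonormalBasis ι ℝ V) (A : V →L[ℝ] V) : |A.det| ≤ ∏ i, ‖(innerSL ℝ (b i)).comp A‖ := by
  classical
  have hrow : ∀ i, (innerSL ℝ (b i)).comp A = innerSL ℝ (adjoint A (b i)) := by
    intro i; ext x; simp [adjoint_inner_left]
  have hdet : A.det = b.toBasis.det fun i => adjoint A (b i) := by
    calc A.det = (LinearMap.adjoint (A : V →ₗ[ℝ] V)).det * b.toBasis.det b.toBasis := by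
          rw [LinearMap.det_adjoint, b.toBasis.det_self, mul_one, star_trivial]
      _ = _ := by
          rw [← Module.Basis.det_comp, ContinuousLinearMap.adjoint_toLinearMap]; rfl
  simpa only [hrow, innerSL_apply_norm, hdet] using b.abs_det_le_prod_norm _

theorem OrthonormalBasis.lipschitzWith_of_lipschitzWith_inner {X : Type*} [PseudoMetricSpace X]
    (b : OrthonormalBasis ι ℝ V) {f : X → V} {K : ℝ≥0}
    (hf : ∀ i, LipschitzWith K fun x => ⟪b i, f x⟫_ℝ) : LipschitzWith (Fintype.card ι * K) f := by
  refine LipschitzWith.of_dist_le_mul fun x y => ?_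
  calc dist (f x) (f y) = ‖∑ i, (⟪b i, f x⟫_ℝ - ⟪b i, f y⟫_ℝ) • b i‖ := by
        rw [dist_eq_norm, ← b.sum_repr' (f x - f y)]
        simp [inner_sub_right]
    _ ≤ ∑ i, |⟪b i, f x⟫_ℝ - ⟪b i, f y⟫_ℝ| := by
        refine (norm_sum_le _ _).trans (Finset.sum_le_sum fun i _ => ?_)
        simp [norm_smul]
    _ ≤ ∑ _i : ι, K * dist x y := Finset.sum_le_sum fun i _ => by
        simpa [Real.dist_eq] using (hf i).dist_le_mul x y
    _ = _ := by simp [mul_assoc]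

theorem OrthonormalBasis.norm_innerSL_comp_fderiv_le_one [FiniteDimensional ℝ V]
    (b : OrthonormalBasis ι ℝ V) {f : V → V} (hf : ∀ i, LipschitzWith 1 fun x => ⟪b i, f x⟫_ℝ)
    (x : V) (i : ι) : ‖(innerSL ℝ (b i)).comp (fderiv ℝ f x)‖ ≤ 1 := by
  by_cases hx : DifferentiableAt ℝ f x
  · rw [← ((innerSL ℝ (b i)).hasFDerivAt.comp x hx.hasFDerivAt).fderiv]
    exact norm_fderiv_le_of_lipschitz ℝ (hf i)
  · simp [fderiv_zero_of_not_differentiableAt hx]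

theorem OrthonormalBasis.addHaar_image_le_of_lipschitzWith_inner [FiniteDimensional ℝ V]
    [MeasurableSpace V] [BorelSpace V] (μ : Measure V) [μ.IsAddHaarMeasure]
    (b : OrthonormalBasis ι ℝ V) {f : V → V} (hf : ∀ i, LipschitzWith 1 fun x => ⟪b i, f x⟫_ℝ)
    (s : Set V) : μ (f '' s) ≤ μ s := by
  have hdet : ∀ x, ENNReal.ofReal |(fderiv ℝ f x).det| ≤ 1 := fun x =>
    ENNReal.ofReal_le_one.2 <| ((fderiv ℝ f x).abs_det_le_prod_norm_innerSL_comp b).trans <|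
      Finset.prod_le_one (fun _ _ => norm_nonneg _) fun i _ =>
        b.norm_innerSL_comp_fderiv_le_one hf x i
  set t := toMeasurable μ s
  calc μ (f '' s) ≤ μ (f '' t) := measure_mono (Set.image_mono (subset_toMeasurable μ s))
    _ ≤ ∫⁻ x in t, ENNReal.ofReal |(fderiv ℝ f x).det| ∂μ :=
        (b.lipschitzWith_of_lipschitzWith_inner hf).addHaar_image_le_lintegral_abs_det_fderiv μ
          (measurableSet_toMeasurable μ s)
    _ ≤ ∫⁻ _ in t, 1 ∂μ := lintegral_mono hdet
    _ = μ s := by rw [setLIntegral_one, measure_toMeasurable]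

end InnerProductSpace

theorem exists_lipschitzWith_one_zero_const_of_le_dist {X : Type*} [PseudoMetricSpace X]
    {A B : Set X} {l : ℝ} (hl : 0 ≤ l) (hAB : ∀ x ∈ A, ∀ y ∈ B, l ≤ dist x y) :
    ∃ u : X → ℝ, LipschitzWith 1 u ∧ (∀ x, u x ∈ Set.Icc 0 l) ∧ Set.EqOn u 0 B ∧
      Set.EqOn u (fun _ => l) A := by
  rcases B.eq_empty_or_nonempty with rfl | hB
  · exact ⟨fun _ => l, LipschitzWith.const' l, fun _ => ⟨hl, le_rfl⟩, by simp, fun _ _ => rfl⟩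
  refine ⟨fun x => min l (Metric.infDist x B), ?_, fun x => ⟨?_, min_le_left _ _⟩, ?_, ?_⟩
  · simpa using (LipschitzWith.const' (K := 1) l).min (Metric.lipschitz_infDist_pt B)
  · exact le_min hl Metric.infDist_nonneg
  · intro y hy
    simp [Metric.infDist_zero_of_mem hy, hl]
  · intro x hx
    exact min_eq_left ((Metric.le_infDist hB).2 (hAB x hx))

theorem EuclideanSpace.volume_preimage_ofLp_pi {ι : Type*} [Fintype ι] (s : ι → Set ℝ) :
    volume (WithLp.ofLp ⁻¹' Set.univ.pi s : Set (EuclideanSpace ℝ ι)) = ∏ i, volume (s i) := by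
  rw [← volume_pi_pi]
  exact (EuclideanSpace.volume_preserving_symm_measurableEquiv_toLp ι).measure_preimage_equiv _


theorem besicovitch_inequality_general {n : ℕ}
    (P : Set (EuclideanSpace ℝ (Fin n)))
    (Q mQ : Fin n → Set (EuclideanSpace ℝ (Fin n)))
    (lam : Fin n → ℝ) (hlam : ∀ i, 0 < lam i)
    (hdist : ∀ i, ∀ x ∈ Q i, ∀ y ∈ mQ i, lam i ≤ dist x y)
    (hdeg : ∀ G : EuclideanSpace ℝ (Fin n) → (Fin n → ℝ),
      ContinuousOn G P →
      (∀ x ∈ P, ∀ i, G x i ∈ Set.Icc (0 : ℝ) 1) →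
      (∀ i, ∀ x ∈ mQ i, G x i = 0) →
      (∀ i, ∀ x ∈ Q i, G x i = 1) →
      {y : Fin n → ℝ | ∀ i, y i ∈ Set.Icc (0 : ℝ) 1} ⊆ G '' P) :
    ∏ i, ENNReal.ofReal (lam i) ≤ volume P := by
  choose u hu_lip hu_mem hu_mQ hu_Q using fun i =>
    exists_lipschitzWith_one_zero_const_of_le_dist (hlam i).le (hdist i)
  let H : EuclideanSpace ℝ (Fin n) → EuclideanSpace ℝ (Fin n) := fun x => WithLp.toLp 2 (u · x)
  have hbox : WithLp.ofLp ⁻¹' Set.univ.pi (fun i => Set.Icc 0 (lam i)) ⊆ H '' P := by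
    intro y hy
    have hcube : (fun i => y i / lam i) ∈ {y : Fin n → ℝ | ∀ i, y i ∈ Set.Icc (0 : ℝ) 1} :=
      fun i => ⟨div_nonneg (hy i trivial).1 (hlam i).le, (div_le_one (hlam i)).2 (hy i trivial).2⟩
    obtain ⟨x, hxP, hx⟩ := hdeg (fun x i => u i x / lam i)
      (continuous_pi fun i => (hu_lip i).continuous.div_const _).continuousOn
      (fun x _ i => ⟨div_nonneg (hu_mem i x).1 (hlam i).le, (div_le_one (hlam i)).2 (hu_mem i x).2⟩)
      (fun i x hx => by simp [hu_mQ i hx])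
      (fun i x hx => by simp [hu_Q i hx, (hlam i).ne'])
      hcube
    refine ⟨x, hxP, WithLp.ofLp_injective 2 (funext fun i => ?_)⟩
    exact (div_left_inj' (hlam i).ne').1 (congrFun hx i)
  calc ∏ i, ENNReal.ofReal (lam i)
      = volume (WithLp.ofLp ⁻¹' Set.univ.pi (fun i => Set.Icc 0 (lam i)) :
          Set (EuclideanSpace ℝ (Fin n))) := by
        rw [EuclideanSpace.volume_preimage_ofLp_pi]
        simp [Real.volume_Icc]
    _ ≤ volume (H '' P) := measure_mono hbox
    _ ≤ volume P := (EuclideanSpace.basisFun _ ℝ).addHaar_image_le_of_lipschitzWith_inner volume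
        (by simpa only [EuclideanSpace.basisFun_inner] using hu_lip) P

/-- Besicovitch's inequality: let `P ⊆ ℝ^n` be a compact domain with closed
"faces" `±Qᵢ ⊆ P` at mutual distance `dist(Qᵢ, −Qᵢ) ≥ λᵢ`, and suppose that
a map of nonzero degree `P → [0,1]^n` sending faces to the corresponding cube
faces exists — encoded homotopy-invariantly by the hypothesis that *every*
continuous map `P → [0,1]^n` sending `−Qᵢ` to `{yᵢ = 0}` and `Qᵢ` to
`{yᵢ = 1}` is onto the cube. Then `vol(P) ≥ ∏ᵢ λᵢ`. -/
theorem besicovitch_inequality {n : ℕ}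
    (P : Set (EuclideanSpace ℝ (Fin n))) (hPc : IsCompact P)
    (Q mQ : Fin n → Set (EuclideanSpace ℝ (Fin n)))
    (hQc : ∀ i, IsClosed (Q i)) (hmQc : ∀ i, IsClosed (mQ i))
    (hQP : ∀ i, Q i ⊆ P) (hmQP : ∀ i, mQ i ⊆ P)
    (lam : Fin n → ℝ) (hlam : ∀ i, 0 < lam i)
    (hdist : ∀ i, ∀ x ∈ Q i, ∀ y ∈ mQ i, lam i ≤ dist x y)
    (hdeg : ∀ G : EuclideanSpace ℝ (Fin n) → (Fin n → ℝ),
      ContinuousOn G P →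
      (∀ x ∈ P, ∀ i, G x i ∈ Set.Icc (0 : ℝ) 1) →
      (∀ i, ∀ x ∈ mQ i, G x i = 0) →
      (∀ i, ∀ x ∈ Q i, G x i = 1) →
      {y : Fin n → ℝ | ∀ i, y i ∈ Set.Icc (0 : ℝ) 1} ⊆ G '' P) :
    ∏ i, ENNReal.ofReal (lam i) ≤ volume P :=
  besicovitch_inequality_general P Q mQ lam hlam hdist hdeg
end

section
/- Every convex polytope P ⊂ ℝ^n all of whose dihedral angles (between pairs of adjacent facets) are at most π/2 is, up to isometry, a Cartesian product of simplices. -/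
/-!
Only the constraints active somewhere on `P` matter, and any two of them make a non-acute angle,
also when their faces do not meet (by a nearest-point argument). Group the normals into the
connected components of their Coxeter graph, whose edges join non-orthogonal normals. Distinct
components are orthogonal, and boundedness of `P` makes each component linearly dependent. In a
connected family with pairwise non-acute angles, a relation `∑ cᵢ gᵢ = 0` also gives
`∑ |cᵢ| gᵢ = 0`, and a nonnegative relation has full support; so each component has a positive
relation and all its proper subfamilies are independent, and therefore cuts a simplex out of its
span. `P` is the orthogonal sum of these simplices.
-/

open RealInnerProductSpace Set Filter Topology

section Polyhedron

variable {E ι : Type*} [NormedAddCommGroup E] [InnerProductSpace ℝ E]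

def polyhedron (w : ι → E) (b : ι → ℝ) : Set E := ⋂ i, {x | ⟪w i, x⟫ ≤ b i}

variable {w : ι → E} {b : ι → ℝ}

lemma mem_polyhedron {x : E} : x ∈ polyhedron w b ↔ ∀ i, ⟪w i, x⟫ ≤ b i := mem_iInter

lemma convex_polyhedron : Convex ℝ (polyhedron w b) :=
  convex_iInter fun i => convex_halfSpace_le (innerₛₗ ℝ (w i)).isLinear (b i)

lemma isClosed_polyhedron : IsClosed (polyhedron w b) :=
  isClosed_iInter fun i => isClosed_le (by fun_prop) continuous_const

lemma exists_pos_add_smul_mem_polyhedron [Finite ι] {x d : E} (hx : x ∈ polyhedron w b)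
    (hd : ∀ i, ⟪w i, x⟫ = b i → ⟪w i, d⟫ ≤ 0) : ∃ ε : ℝ, 0 < ε ∧ x + ε • d ∈ polyhedron w b := by
  have h : ∀ i, ∀ᶠ ε in 𝓝[>] (0 : ℝ), ⟪w i, x + ε • d⟫ ≤ b i := by
    intro i
    rcases (mem_polyhedron.1 hx i).eq_or_lt with hi | hi
    · filter_upwards [self_mem_nhdsWithin] with ε (hε : 0 < ε)
      rw [inner_add_right, real_inner_smul_right]
      nlinarith [hd i hi]
    · have hc : Continuous fun ε : ℝ => ⟪w i, x + ε • d⟫ := by fun_prop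
      refine nhdsWithin_le_nhds (((hc.tendsto 0).eventually (gt_mem_nhds ?_)).mono
        fun _ => le_of_lt)
      simpa using hi
  obtain ⟨ε, hε, hε0⟩ := ((eventually_all.2 h).and self_mem_nhdsWithin).exists
  exact ⟨ε, hε0, mem_polyhedron.2 hε⟩

/-- Walking from `x₀ ∈ P` towards `z ∉ P`, the first constraint to become active is one that `z`
violates. -/
lemma exists_active_of_notMem_polyhedron [Finite ι] {x₀ z : E} (hx₀ : x₀ ∈ polyhedron w b)
    (hz : z ∉ polyhedron w b) :
    ∃ i, b i < ⟪w i, z⟫ ∧ ∃ y ∈ polyhedron w b, ⟪w i, y⟫ = b i := by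
  set S := {i | b i < ⟪w i, z⟫}
  have hS : S.Nonempty := by simpa [S, mem_polyhedron, Set.Nonempty] using hz
  set t : ι → ℝ := fun i => (b i - ⟪w i, x₀⟫) / ⟪w i, z - x₀⟫
  have hpos : ∀ i ∈ S, 0 < ⟪w i, z - x₀⟫ := fun i hi => by
    rw [inner_sub_right]; linarith [mem_polyhedron.1 hx₀ i, show b i < ⟪w i, z⟫ from hi]
  obtain ⟨i₀, hi₀, hmin⟩ := S.exists_min_image t S.toFinite hS
  have ht₀ : 0 ≤ t i₀ := div_nonneg (by linarith [mem_polyhedron.1 hx₀ i₀]) (hpos i₀ hi₀).le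
  have ht₁ : t i₀ ≤ 1 := by
    rw [div_le_one (hpos i₀ hi₀), inner_sub_right]
    linarith [show b i₀ < ⟪w i₀, z⟫ from hi₀]
  have hy : ∀ i, ⟪w i, x₀ + t i₀ • (z - x₀)⟫ = ⟪w i, x₀⟫ + t i₀ * ⟪w i, z - x₀⟫ := fun i => by
    rw [inner_add_right, real_inner_smul_right]
  refine ⟨i₀, hi₀, x₀ + t i₀ • (z - x₀), mem_polyhedron.2 fun i => ?_, ?_⟩
  · rw [hy]
    by_cases hi : i ∈ S
    · have := (le_div_iff₀ (hpos i hi)).1 (hmin i hi)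
      linarith
    · have hzi : ⟪w i, z⟫ ≤ b i := not_lt.1 hi
      rw [inner_sub_right]
      nlinarith [mem_polyhedron.1 hx₀ i]
  · rw [hy, div_mul_cancel₀ _ (hpos i₀ hi₀).ne']
    ring

lemma polyhedron_eq_polyhedron_active [Finite ι] (hne : (polyhedron w b).Nonempty) :
    polyhedron w b =
      polyhedron (fun i : {i // ∃ y ∈ polyhedron w b, ⟪w i, y⟫ = b i} => w i) (fun i => b i) := by
  refine Subset.antisymm (fun x hx => mem_polyhedron.2 fun i => mem_polyhedron.1 hx i)
    fun z hz => ?_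
  by_contra hzP
  obtain ⟨x₀, hx₀⟩ := hne
  obtain ⟨i, hi, hact⟩ := exists_active_of_notMem_polyhedron hx₀ hzP
  exact (mem_polyhedron.1 hz ⟨i, hact⟩).not_gt hi

lemma inner_lt_of_mem_interior_polyhedron {x : E} (hx : x ∈ interior (polyhedron w b)) {i : ι}
    (hwi : w i ≠ 0) : ⟪w i, x⟫ < b i := by
  obtain ⟨ε, hε, hball⟩ := Metric.mem_nhds_iff.1 (mem_interior_iff_mem_nhds.1 hx)
  have hw : 0 < ‖w i‖ := norm_pos_iff.2 hwi
  have hmem : x + (ε / 2 / ‖w i‖) • w i ∈ polyhedron w b := hball <| by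
    rw [Metric.mem_ball, dist_self_add_left, norm_smul, Real.norm_of_nonneg (by positivity),
      div_mul_cancel₀ _ hw.ne']
    linarith
  have := mem_polyhedron.1 hmem i
  rw [inner_add_right, real_inner_smul_right, real_inner_self_eq_norm_sq] at this
  have : 0 < ε / 2 / ‖w i‖ * ‖w i‖ ^ 2 := by positivity
  linarith

lemma eq_zero_of_forall_inner_nonpos_of_isBounded (hb : Bornology.IsBounded (polyhedron w b))
    (hne : (polyhedron w b).Nonempty) {d : E} (hd : ∀ i, ⟪w i, d⟫ ≤ 0) : d = 0 := by
  obtain ⟨x₀, hx₀⟩ := hne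
  obtain ⟨R, hR⟩ := isBounded_iff_forall_norm_le.1 hb
  have hray : ∀ t : ℝ, 0 ≤ t → t * ‖d‖ ≤ R + ‖x₀‖ := fun t ht => by
    have hmem : x₀ + t • d ∈ polyhedron w b := mem_polyhedron.2 fun i => by
      rw [inner_add_right, real_inner_smul_right]
      nlinarith [mem_polyhedron.1 hx₀ i, hd i]
    have := norm_sub_le (x₀ + t • d) x₀
    rw [add_sub_cancel_left, norm_smul, Real.norm_of_nonneg ht] at this
    linarith [hR _ hmem]
  by_contra hd0
  have hdpos : 0 < ‖d‖ := norm_pos_iff.2 hd0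
  have hR0 : 0 ≤ R + ‖x₀‖ := by linarith [hR x₀ hx₀, norm_nonneg x₀]
  have := hray ((R + ‖x₀‖ + 1) / ‖d‖) (by positivity)
  rw [div_mul_cancel₀ _ hdpos.ne'] at this
  linarith

/-- `v := e - ⟪w i, e⟫ • w i` is a feasible direction inside the face (this is where the
non-acute angles enter), so `‖v‖ ^ 2 = ⟪e, v⟫ ≤ 0`. -/
lemma eq_inner_smul_of_feasible_of_normal [Finite ι] {x e : E} {i : ι} (hwi : ‖w i‖ = 1)
    (hx : x ∈ polyhedron w b) (hxi : ⟪w i, x⟫ = b i)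
    (hacute : ∀ j, j ≠ i → ⟪w j, x⟫ = b j → ⟪w i, w j⟫ ≤ 0)
    (hfeas : ∀ j, ⟪w j, x⟫ = b j → ⟪w j, e⟫ ≤ 0)
    (hnormal : ∀ z ∈ polyhedron w b, ⟪w i, z⟫ = b i → ⟪e, z - x⟫ ≤ 0) :
    e = ⟪w i, e⟫ • w i := by
  set v := e - ⟪w i, e⟫ • w i
  have hwii : ⟪w i, w i⟫ = 1 := by rw [real_inner_self_eq_norm_sq, hwi, one_pow]
  have hvi : ⟪w i, v⟫ = 0 := by
    rw [inner_sub_right, real_inner_smul_right, hwii, mul_one, sub_self]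
  have hvfeas : ∀ j, ⟪w j, x⟫ = b j → ⟪w j, v⟫ ≤ 0 := fun j hj => by
    rcases eq_or_ne j i with rfl | hji
    · exact hvi.le
    · rw [inner_sub_right, real_inner_smul_right, real_inner_comm (w i) (w j)]
      nlinarith [hfeas j hj, hfeas i hxi, hacute j hji hj]
  obtain ⟨ε, hε, hεP⟩ := exists_pos_add_smul_mem_polyhedron hx hvfeas
  have h := hnormal _ hεP (by rw [inner_add_right, real_inner_smul_right, hvi, hxi]; ring)
  rw [add_sub_cancel_left, real_inner_smul_right] at h
  have hev : ⟪e, v⟫ = ‖v‖ ^ 2 := by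
    rw [← real_inner_self_eq_norm_sq, inner_sub_left _ _ v, real_inner_smul_left, hvi]; ring
  rw [hev] at h
  have hv : ‖v‖ = 0 := pow_eq_zero_iff two_ne_zero |>.1 <|
    le_antisymm (nonpos_of_mul_nonpos_right h hε) (sq_nonneg _)
  exact sub_eq_zero.1 (norm_eq_zero.1 hv)

/-- If the two faces do not meet, then for `y` on the `j`-th face the nearest point `x` of the
`i`-th face satisfies `y - x = a • w i` with `a < 0`, while `⟪w j, y - x⟫ ≥ 0`. -/
lemma inner_nonpos_of_active [Finite ι] [CompleteSpace E]
    (hacute : ∀ x ∈ polyhedron w b, ∀ i j, i ≠ j → ⟪w i, x⟫ = b i → ⟪w j, x⟫ = b j →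
      ⟪w i, w j⟫ ≤ 0)
    {i j : ι} (hwi : ‖w i‖ = 1) (hij : i ≠ j) (hi : ∃ x ∈ polyhedron w b, ⟪w i, x⟫ = b i)
    (hj : ∃ y ∈ polyhedron w b, ⟪w j, y⟫ = b j) : ⟪w i, w j⟫ ≤ 0 := by
  obtain ⟨y, hyP, hyj⟩ := hj
  by_cases hyi : ⟪w i, y⟫ = b i
  · exact hacute y hyP i j hij hyi hyj
  set F := polyhedron w b ∩ {x | ⟪w i, x⟫ = b i}
  have hFconv : Convex ℝ F :=
    convex_polyhedron.inter (convex_hyperplane (innerₛₗ ℝ (w i)).isLinear (b i))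
  have hFclosed : IsClosed F :=
    isClosed_polyhedron.inter (isClosed_eq (by fun_prop) continuous_const)
  obtain ⟨x, ⟨hxP, hxi⟩, hxmin⟩ :=
    exists_norm_eq_iInf_of_complete_convex (by obtain ⟨x₁, hx₁⟩ := hi; exact ⟨x₁, hx₁⟩)
      hFclosed.isComplete hFconv y
  have hnormal := (norm_eq_iInf_iff_real_inner_le_zero hFconv ⟨hxP, hxi⟩).1 hxmin
  have hpar : y - x = ⟪w i, y - x⟫ • w i :=
    eq_inner_smul_of_feasible_of_normal hwi hxP hxi
      (fun k hki hk => hacute x hxP i k hki.symm hxi hk)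
      (fun k hk => by rw [inner_sub_right, hk]; linarith [mem_polyhedron.1 hyP k])
      (fun z hz hzi => hnormal z ⟨hz, hzi⟩)
  have ha : ⟪w i, y - x⟫ < 0 := by
    refine lt_of_le_of_ne (by rw [inner_sub_right, hxi]; linarith [mem_polyhedron.1 hyP i])
      fun ha => hyi ?_
    rw [ha, zero_smul, sub_eq_zero] at hpar
    rwa [hpar]
  have hyx : 0 ≤ ⟪w j, y - x⟫ := by
    rw [inner_sub_right, hyj]; linarith [mem_polyhedron.1 hxP j]
  rw [hpar, real_inner_smul_right, real_inner_comm (w i) (w j)] at hyx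
  nlinarith

end Polyhedron

section Obtuse

variable {E ι : Type*} [NormedAddCommGroup E] [InnerProductSpace ℝ E] {g : ι → E}

lemma sum_mul_inner_eq_zero [Fintype ι] {c : ι → ℝ} (hc : ∑ i, c i • g i = 0) (x : E) :
    ∑ i, c i * ⟪g i, x⟫ = 0 := by
  simpa [sum_inner, real_inner_smul_left] using congrArg (⟪·, x⟫) hc

lemma norm_sum_smul_sq [Fintype ι] (a : ι → ℝ) :
    ‖∑ i, a i • g i‖ ^ 2 = ∑ i, ∑ j, a i * a j * ⟪g i, g j⟫ := by
  simp only [← real_inner_self_eq_norm_sq, sum_inner, inner_sum, real_inner_smul_left,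
    real_inner_smul_right]
  exact Finset.sum_congr rfl fun i _ => Finset.sum_congr rfl fun j _ => by
    rw [real_inner_comm]; ring

/-- Pairwise non-acute angles give `‖∑ |cᵢ| gᵢ‖ ≤ ‖∑ cᵢ gᵢ‖`. -/
lemma sum_abs_smul_eq_zero [Fintype ι] (hg : Pairwise fun i j => ⟪g i, g j⟫ ≤ 0) {c : ι → ℝ}
    (hc : ∑ i, c i • g i = 0) : ∑ i, |c i| • g i = 0 := by
  have h : ‖∑ i, |c i| • g i‖ ^ 2 ≤ ‖∑ i, c i • g i‖ ^ 2 := by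
    rw [norm_sum_smul_sq, norm_sum_smul_sq]
    refine Finset.sum_le_sum fun i _ => Finset.sum_le_sum fun j _ => ?_
    rcases eq_or_ne i j with rfl | hij
    · rw [abs_mul_abs_self]
    · have := hg hij
      nlinarith [abs_mul_abs_self (c i), le_abs_self (c i * c j), abs_mul (c i) (c j)]
  rw [hc, norm_zero] at h
  exact norm_eq_zero.1 (pow_eq_zero_iff two_ne_zero |>.1 (le_antisymm (by simpa using h)
    (sq_nonneg _)))

variable {H : SimpleGraph ι}

lemma pos_of_sum_smul_eq_zero [Fintype ι] (hg : Pairwise fun i j => ⟪g i, g j⟫ ≤ 0)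
    (hH : H.Connected) (hadj : ∀ i j, H.Adj i j → ⟪g i, g j⟫ ≠ 0) {c : ι → ℝ}
    (hc0 : ∀ i, 0 ≤ c i) (hc : ∑ i, c i • g i = 0) {i : ι} (hi : 0 < c i) (j : ι) :
    0 < c j := by
  have hstep : ∀ k l, H.Adj k l → 0 < c k → 0 < c l := fun k l hkl hk => by
    refine (hc0 l).lt_of_ne fun hl => hadj k l hkl ?_
    have hterms : ∀ m ∈ Finset.univ, c m * ⟪g m, g l⟫ ≤ 0 := fun m _ => by
      rcases eq_or_ne m l with rfl | hml
      · rw [← hl, zero_mul]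
      · exact mul_nonpos_of_nonneg_of_nonpos (hc0 m) (hg hml)
    have := (Finset.sum_eq_zero_iff_of_nonpos hterms).1 (sum_mul_inner_eq_zero hc (g l)) k
      (Finset.mem_univ k)
    exact (mul_eq_zero.1 this).resolve_left hk.ne'
  obtain ⟨p⟩ := hH.preconnected i j
  induction p with
  | nil => exact hi
  | cons hkl _ ih => exact ih (hstep _ _ hkl hi)

lemma linearIndepOn_compl_singleton_of_connected [Fintype ι]
    (hg : Pairwise fun i j => ⟪g i, g j⟫ ≤ 0) (hH : H.Connected)
    (hadj : ∀ i j, H.Adj i j → ⟪g i, g j⟫ ≠ 0) (s : ι) :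
    LinearIndepOn ℝ g {s}ᶜ := by
  rw [linearIndepOn_iff]
  intro l hl hl0
  have hls : l s = 0 := (Finsupp.mem_supported' ℝ l).1 hl s (by simp)
  rw [Finsupp.linearCombination_apply, Finsupp.sum_fintype _ _ (by simp)] at hl0
  by_contra hne
  obtain ⟨j, hj⟩ := Finsupp.ne_iff.1 hne
  have := pos_of_sum_smul_eq_zero hg hH hadj (fun i => abs_nonneg (l i))
    (sum_abs_smul_eq_zero hg hl0) (abs_pos.2 hj) s
  rw [hls, abs_zero] at this
  exact lt_irrefl 0 this

lemma exists_pos_sum_smul_eq_zero [Fintype ι] (hg : Pairwise fun i j => ⟪g i, g j⟫ ≤ 0)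
    (hH : H.Connected) (hadj : ∀ i j, H.Adj i j → ⟪g i, g j⟫ ≠ 0)
    (hdep : ¬LinearIndependent ℝ g) : ∃ μ : ι → ℝ, (∀ i, 0 < μ i) ∧ ∑ i, μ i • g i = 0 := by
  obtain ⟨c, hc, i, hi⟩ := Fintype.not_linearIndependent_iff.1 hdep
  exact ⟨fun j => |c j|, pos_of_sum_smul_eq_zero hg hH hadj (fun j => abs_nonneg (c j))
    (sum_abs_smul_eq_zero hg hc) (abs_pos.2 hi), sum_abs_smul_eq_zero hg hc⟩

end Obtuse

section Simplex

open Submodule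

variable {E ι : Type*} [NormedAddCommGroup E] [InnerProductSpace ℝ E] {g : ι → E}

lemma exists_mem_span_inner_eq [FiniteDimensional ℝ E] (hg : LinearIndependent ℝ g) (c : ι → ℝ) :
    ∃ v ∈ span ℝ (range g), ∀ i, ⟪g i, v⟫ = c i := by
  let B := Module.Basis.span hg
  let f : StrongDual ℝ (span ℝ (range g)) := LinearMap.toContinuousLinearMap (B.constr ℝ c)
  refine ⟨(InnerProductSpace.toDual ℝ (span ℝ (range g))).symm f, coe_mem _, fun i => ?_⟩
  have hBi : (B i : E) = g i := Module.Basis.coe_span_apply hg i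
  rw [real_inner_comm, ← hBi, ← Submodule.coe_inner, InnerProductSpace.toDual_symm_apply]
  simp [f, B.constr_basis]

lemma eq_zero_of_mem_span_of_forall_inner_eq_zero {v : E} (hv : v ∈ span ℝ (range g))
    (h : ∀ i, ⟪g i, v⟫ = 0) : v = 0 := by
  have : span ℝ (range g) ⟂ span ℝ {v} := isOrtho_span.2 (by rintro _ ⟨i, rfl⟩ _ rfl; exact h i)
  exact inner_self_eq_zero.1 (this.inner_eq hv (mem_span_singleton_self v))

lemma exists_simplex_vertices [Fintype ι] [DecidableEq ι] [FiniteDimensional ℝ E] (b : ι → ℝ)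
    {μ : ι → ℝ} (hμ : ∀ i, μ i ≠ 0) (hdep : ∑ i, μ i • g i = 0) (hind : ∀ s, LinearIndepOn ℝ g {s}ᶜ) :
    ∃ v : ι → E, (∀ s, v s ∈ span ℝ (range g)) ∧
      ∀ s t, ⟪g t, v s⟫ = b t - if t = s then (∑ i, μ i * b i) / μ t else 0 := by
  have hvert : ∀ s, ∃ v ∈ span ℝ (range g), ∀ i, i ≠ s → ⟪g i, v⟫ = b i := fun s => by
    obtain ⟨v, hvV, hv⟩ := exists_mem_span_inner_eq (hind s) fun i => b i
    exact ⟨v, span_mono (range_comp_subset_range _ g) hvV, fun i hi => hv ⟨i, hi⟩⟩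
  choose v hvV hv using hvert
  refine ⟨v, hvV, fun s t => ?_⟩
  split_ifs with hts
  · subst hts
    have h : ∑ i, μ i * (⟪g i, v t⟫ - b i) = -∑ i, μ i * b i := by
      simp only [mul_sub, Finset.sum_sub_distrib, sum_mul_inner_eq_zero hdep, zero_sub]
    rw [Finset.sum_eq_single t (fun i _ hi => by rw [hv t i hi, sub_self, mul_zero])
      (by simp)] at h
    field_simp [hμ t]
    linarith
  · rw [hv s t hts, sub_zero]

/-- The vertex `v s` is where all constraints but the `s`-th are active, and the barycentric
coordinates of `x` are `μ s * (b s - ⟪g s, x⟫) / β` with `β = ∑ μ i * b i`. -/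
lemma exists_affineIndependent_convexHull_eq [Fintype ι] [FiniteDimensional ℝ E] (b : ι → ℝ)
    {μ : ι → ℝ} (hμ : ∀ i, 0 < μ i) (hdep : ∑ i, μ i • g i = 0)
    (hind : ∀ s, LinearIndepOn ℝ g {s}ᶜ) (hβ : 0 < ∑ i, μ i * b i) :
    ∃ v : ι → E, AffineIndependent ℝ v ∧ (∀ s, v s ∈ span ℝ (range g)) ∧
      (span ℝ (range g) : Set E) ∩ polyhedron g b = convexHull ℝ (range v) := by
  classical
  obtain ⟨v, hvV, hvs⟩ := exists_simplex_vertices b (fun i => (hμ i).ne') hdep hind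
  set β := ∑ i, μ i * b i
  have hcomb : ∀ (w : ι → ℝ) (S : Finset ι) (t : ι), ⟪g t, ∑ e ∈ S, w e • v e⟫ =
      (∑ e ∈ S, w e) * b t - if t ∈ S then w t * (β / μ t) else 0 := fun w S t => by
    simp only [inner_sum, real_inner_smul_right, hvs, mul_sub, Finset.sum_sub_distrib,
      Finset.sum_mul, mul_ite, mul_zero, Finset.sum_ite_eq]
  set γ : E → ι → ℝ := fun x s => μ s * (b s - ⟪g s, x⟫) / β
  have hγsum : ∀ x, ∑ s, γ x s = 1 := fun x => by
    simp only [γ, ← Finset.sum_div, mul_sub, Finset.sum_sub_distrib, sum_mul_inner_eq_zero hdep,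
      sub_zero]
    exact div_self hβ.ne'
  have hγ : ∀ x ∈ span ℝ (range g), ∑ s, γ x s • v s = x := fun x hx => by
    refine sub_eq_zero.1 (eq_zero_of_mem_span_of_forall_inner_eq_zero
      (sub_mem (sum_mem fun s _ => smul_mem _ _ (hvV s)) hx) fun t => ?_)
    rw [inner_sub_right, hcomb, hγsum, if_pos (Finset.mem_univ t)]
    simp only [γ]
    field_simp [(hμ t).ne']
    ring
  refine ⟨v, ?_, hvV, Subset.antisymm (fun x ⟨hx, hxb⟩ => ?_) (convexHull_min ?_ ?_)⟩
  · refine affineIndependent_iff.2 fun S w hw hwv t ht => ?_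
    have h := hcomb w S t
    rw [hwv, inner_zero_right, hw, if_pos ht, zero_mul, zero_sub, zero_eq_neg] at h
    exact (mul_eq_zero.1 h).resolve_right (div_pos hβ (hμ t)).ne'
  · rw [← hγ x hx]
    exact (convex_convexHull ℝ _).sum_mem
      (fun s _ => div_nonneg (mul_nonneg (hμ s).le (sub_nonneg.2 (mem_polyhedron.1 hxb s))) hβ.le)
      (hγsum x) fun s _ => subset_convexHull ℝ _ (mem_range_self s)
  · rintro _ ⟨s, rfl⟩
    refine ⟨hvV s, mem_polyhedron.2 fun t => ?_⟩
    rw [hvs]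
    split_ifs
    · linarith [div_pos hβ (hμ t)]
    · linarith
  · exact (span ℝ (range g)).convex.inter convex_polyhedron

lemma exists_affineIndependent_convexHull_eq_of_connected [Fintype ι] [FiniteDimensional ℝ E]
    {b : ι → ℝ} {H : SimpleGraph ι} (hg : Pairwise fun i j => ⟪g i, g j⟫ ≤ 0) (hH : H.Connected)
    (hadj : ∀ i j, H.Adj i j → ⟪g i, g j⟫ ≠ 0) (hdep : ¬LinearIndependent ℝ g) {x₀ : E}
    (hx₀ : ∀ i, ⟪g i, x₀⟫ < b i) :
    ∃ v : ι → E, AffineIndependent ℝ v ∧ (∀ s, v s ∈ span ℝ (range g)) ∧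
      (span ℝ (range g) : Set E) ∩ polyhedron g b = convexHull ℝ (range v) := by
  obtain ⟨μ, hμ, hrel⟩ := exists_pos_sum_smul_eq_zero hg hH hadj hdep
  refine exists_affineIndependent_convexHull_eq b hμ hrel
    (linearIndepOn_compl_singleton_of_connected hg hH hadj) ?_
  have := hH.nonempty
  calc (0 : ℝ) = ∑ i, μ i * ⟪g i, x₀⟫ := (sum_mul_inner_eq_zero hrel x₀).symm
    _ < ∑ i, μ i * b i := Finset.sum_lt_sum_of_nonempty Finset.univ_nonempty
        fun i _ => mul_lt_mul_of_pos_left (hx₀ i) (hμ i)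

/-- If the block were independent, some `d` in its span would have `⟪g i, d⟫ = -1` on the block
and `0` elsewhere. -/
lemma not_linearIndepOn_of_orthogonal [FiniteDimensional ℝ E]
    (hray : ∀ d, (∀ i, ⟪g i, d⟫ ≤ 0) → d = 0) {s : Set ι} (hs : s.Nonempty)
    (horth : ∀ i ∈ s, ∀ j ∉ s, ⟪g i, g j⟫ = 0) : ¬LinearIndepOn ℝ g s := by
  intro hind
  obtain ⟨d, hdV, hd⟩ := exists_mem_span_inner_eq hind fun _ => -1
  have hd0 : d = 0 := hray d fun j => by
    by_cases hj : j ∈ s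
    · rw [show ⟪g j, d⟫ = -1 from hd ⟨j, hj⟩]; norm_num
    · have : span ℝ {g j} ⟂ span ℝ (range fun i : s => g i) := isOrtho_span.2 <| by
        rintro _ rfl _ ⟨i, rfl⟩
        rw [real_inner_comm]; exact horth i i.2 j hj
      exact (this.inner_eq (mem_span_singleton_self _) hdV).le
  obtain ⟨i, hi⟩ := hs
  have := hd ⟨i, hi⟩
  rw [hd0, inner_zero_right] at this
  norm_num at this

end Simplex

section Decomposition

open Submodule

variable {E ι : Type*} [NormedAddCommGroup E] [InnerProductSpace ℝ E] [FiniteDimensional ℝ E]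

lemma polyhedron_eq_sum_slices {κ : Type*} [Fintype κ] {V : κ → Submodule ℝ E}
    (hV : Pairwise fun c c' => V c ⟂ V c') (hsup : ⨆ c, V c = ⊤) {g : ι → E} {comp : ι → κ}
    (hg : ∀ i, g i ∈ V (comp i)) (b : ι → ℝ) :
    polyhedron g b = {x | ∃ y : κ → E,
      (∀ c, y c ∈ (V c : Set E) ∩ polyhedron (fun i : {i // comp i = c} => g i) (fun i => b i)) ∧
        x = ∑ c, y c} := by
  ext x
  constructor
  · intro hx
    refine ⟨fun c => (V c).starProjection x, fun c => ⟨starProjection_apply_mem _ x,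
      mem_polyhedron.2 fun i => ?_⟩, ?_⟩
    · have h := starProjection_inner_eq_zero x (g i) (i.2 ▸ hg i)
      rw [inner_sub_left, real_inner_comm, real_inner_comm (g i)] at h
      rw [← sub_eq_zero.1 h]
      exact mem_polyhedron.1 hx i
    · exact ((orthogonalFamily_iff_pairwise.2 hV).sum_projection_of_mem_iSup x
        (hsup ▸ mem_top)).symm
  · rintro ⟨y, hy, rfl⟩
    refine mem_polyhedron.2 fun i => ?_
    rw [inner_sum, Finset.sum_eq_single (comp i)
      (fun c _ hc => (hV (Ne.symm hc)).inner_eq (hg i) (hy c).1) (by simp)]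
    exact mem_polyhedron.1 (hy (comp i)).2 ⟨i, rfl⟩

end Decomposition

section Product

variable {E : Type*} [NormedAddCommGroup E] [InnerProductSpace ℝ E]

/-- A translate of the Minkowski sum of simplices lying in pairwise orthogonal subspaces that
span `E`: up to isometry, the Cartesian product of the simplices. -/
def IsSimplexProduct (P : Set E) : Prop :=
  ∃ (k : ℕ) (V : Fin k → Submodule ℝ E) (Δ : Fin k → Set E) (x₀ : E),
    (∀ i j, i ≠ j → ∀ x ∈ V i, ∀ y ∈ V j, ⟪x, y⟫ = 0) ∧
    (⨆ i, V i) = ⊤ ∧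
    (∀ i, Δ i ⊆ (V i : Set E)) ∧
    (∀ i, ∃ (d : ℕ) (pts : Fin (d + 1) → E),
      AffineIndependent ℝ pts ∧ (∀ l, pts l ∈ V i) ∧ Δ i = convexHull ℝ (Set.range pts)) ∧
    P = {x | ∃ y : Fin k → E, (∀ i, y i ∈ Δ i) ∧ x = x₀ + ∑ i, y i}

lemma exists_fin_affineIndependent_range_eq {σ : Type*} [Fintype σ] [Nonempty σ] {v : σ → E}
    (hv : AffineIndependent ℝ v) :
    ∃ (d : ℕ) (pts : Fin (d + 1) → E), AffineIndependent ℝ pts ∧ range pts = range v := by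
  let e := Fintype.equivFinOfCardEq (Nat.sub_add_cancel (Fintype.card_pos (α := σ))).symm
  exact ⟨_, v ∘ e.symm, (affineIndependent_equiv e.symm).2 hv, e.symm.surjective.range_comp v⟩

lemma isSimplexProduct_of_fintype {κ : Type*} [Fintype κ] {V : κ → Submodule ℝ E}
    (hV : Pairwise fun c c' => V c ⟂ V c') (hsup : ⨆ c, V c = ⊤) {σ : κ → Type*}
    [∀ c, Fintype (σ c)] [∀ c, Nonempty (σ c)] {v : ∀ c, σ c → E}
    (hv : ∀ c, AffineIndependent ℝ (v c)) (hvV : ∀ c s, v c s ∈ V c) {Δ : κ → Set E}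
    (hΔ : ∀ c, Δ c = convexHull ℝ (range (v c))) :
    IsSimplexProduct {x | ∃ y : κ → E, (∀ c, y c ∈ Δ c) ∧ x = ∑ c, y c} := by
  obtain rfl : Δ = fun c => convexHull ℝ (range (v c)) := funext hΔ
  let e := (Fintype.equivFin κ).symm
  refine ⟨Fintype.card κ, V ∘ e, fun t => convexHull ℝ (range (v (e t))), 0,
    fun t t' h x hx y hy => (hV (e.injective.ne h)).inner_eq hx hy,
    (e.iSup_comp (g := V)).trans hsup,
    fun t => convexHull_min (range_subset_iff.2 (hvV _)) (V _).convex, fun t => ?_, ?_⟩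
  · obtain ⟨d, pts, hpts, hrange⟩ := exists_fin_affineIndependent_range_eq (hv (e t))
    refine ⟨d, pts, hpts, fun l => ?_, by rw [hrange]⟩
    obtain ⟨s, hs⟩ : pts l ∈ range (v (e t)) := hrange ▸ mem_range_self l
    exact hs ▸ hvV _ s
  · ext x
    constructor
    · rintro ⟨y, hy, rfl⟩
      exact ⟨y ∘ e, fun t => hy (e t), by simp [e.sum_comp y]⟩
    · rintro ⟨y, hy, rfl⟩
      refine ⟨y ∘ e.symm, fun c => ?_, ?_⟩
      · have : y (e.symm c) ∈ convexHull ℝ (range (v (e (e.symm c)))) := hy (e.symm c)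
        rwa [e.apply_symm_apply] at this
      simp [e.symm.sum_comp y]

end Product

section Assembly

open Submodule

variable {E ι : Type*} [NormedAddCommGroup E] [InnerProductSpace ℝ E]

def coxeterGraph (g : ι → E) : SimpleGraph ι where
  Adj i j := i ≠ j ∧ ⟪g i, g j⟫ ≠ 0
  symm := ⟨fun _ _ h => ⟨h.1.symm, by rw [real_inner_comm]; exact h.2⟩⟩
  loopless := ⟨fun _ h => h.1 rfl⟩

lemma coxeterGraph_adj {g : ι → E} {i j : ι} :
    (coxeterGraph g).Adj i j ↔ i ≠ j ∧ ⟪g i, g j⟫ ≠ 0 := Iff.rfl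

lemma inner_eq_zero_of_connectedComponentMk_ne {g : ι → E} {i j : ι}
    (h : (coxeterGraph g).connectedComponentMk i ≠ (coxeterGraph g).connectedComponentMk j) :
    ⟪g i, g j⟫ = 0 := by
  by_contra hij
  exact h (SimpleGraph.ConnectedComponent.connectedComponentMk_eq_of_adj
    (coxeterGraph_adj.2 ⟨fun hij' => h (hij' ▸ rfl), hij⟩))

theorem isSimplexProduct_polyhedron [FiniteDimensional ℝ E] [Finite ι] {g : ι → E} {b : ι → ℝ}
    (hg : Pairwise fun i j => ⟪g i, g j⟫ ≤ 0) (hray : ∀ d, (∀ i, ⟪g i, d⟫ ≤ 0) → d = 0)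
    {x₀ : E} (hx₀ : ∀ i, ⟪g i, x₀⟫ < b i) : IsSimplexProduct (polyhedron g b) := by
  classical
  have := Fintype.ofFinite ι
  let G := coxeterGraph g
  let V : G.ConnectedComponent → Submodule ℝ E := fun c => span ℝ (range fun i : c.supp => g i)
  have hgV : ∀ i, g i ∈ V (G.connectedComponentMk i) := fun i => subset_span ⟨⟨i, rfl⟩, rfl⟩
  have hV : Pairwise fun c c' => V c ⟂ V c' := fun c c' h => isOrtho_span.2 <| by
    rintro _ ⟨i, rfl⟩ _ ⟨j, rfl⟩
    exact inner_eq_zero_of_connectedComponentMk_ne (by rw [i.2, j.2]; exact h)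
  have hsup : ⨆ c, V c = ⊤ := by
    rw [← orthogonal_eq_bot_iff, eq_bot_iff]
    intro d hd
    exact hray d fun i => ((mem_orthogonal _ d).1 hd (g i)
      (le_iSup V (G.connectedComponentMk i) (hgV i))).le
  have hsimplex : ∀ c : G.ConnectedComponent, ∃ v : c.supp → E, AffineIndependent ℝ v ∧
      (∀ s, v s ∈ V c) ∧
      (V c : Set E) ∩ polyhedron (fun i : c.supp => g i) (fun i => b i) =
        convexHull ℝ (range v) := fun c =>
    exists_affineIndependent_convexHull_eq_of_connected
      (fun i j hij => hg (Subtype.coe_injective.ne hij)) c.connected_toSimpleGraph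
      (fun i j hij => (coxeterGraph_adj.1 ((c.toSimpleGraph_adj i.2 j.2).1 hij)).2)
      (not_linearIndepOn_of_orthogonal hray c.nonempty_supp
        fun i hi j hj => inner_eq_zero_of_connectedComponentMk_ne
          (by rw [hi]; exact fun h => hj h.symm))
      fun i => hx₀ i
  choose v hv hvV hvΔ using hsimplex
  have (c : G.ConnectedComponent) : Nonempty c.supp := c.nonempty_supp.to_subtype
  rw [polyhedron_eq_sum_slices hV hsup hgV b]
  exact isSimplexProduct_of_fintype hV hsup hv hvV hvΔ

end Assembly

/-- Steinitz-type theorem: a convex polytope `P ⊂ ℝ^n` all of whose dihedral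
angles are non-obtuse (outward unit normals of any two facets sharing a point
have nonpositive inner product) is a Cartesian product of simplices, i.e. a
(translated) Minkowski sum of simplices lying in pairwise orthogonal subspaces
spanning `ℝ^n`. -/
theorem acute_polytope_is_product_of_simplices {n m : ℕ}
    (u : Fin m → EuclideanSpace ℝ (Fin n)) (b : Fin m → ℝ)
    (hu : ∀ i, ‖u i‖ = 1)
    (P : Set (EuclideanSpace ℝ (Fin n)))
    (hP : P = ⋂ i, {x | ⟪u i, x⟫ ≤ b i})
    (hPc : IsCompact P) (hPint : (interior P).Nonempty)
    (hacute : ∀ i j, i ≠ j →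
      (P ∩ {x | ⟪u i, x⟫ = b i} ∩ {x | ⟪u j, x⟫ = b j}).Nonempty →
      ⟪u i, u j⟫ ≤ 0) :
    ∃ (k : ℕ) (V : Fin k → Submodule ℝ (EuclideanSpace ℝ (Fin n)))
      (Δ : Fin k → Set (EuclideanSpace ℝ (Fin n)))
      (x₀ : EuclideanSpace ℝ (Fin n)),
      (∀ i j, i ≠ j → ∀ x ∈ V i, ∀ y ∈ V j, ⟪x, y⟫ = 0) ∧
      (⨆ i, V i) = ⊤ ∧
      (∀ i, Δ i ⊆ (V i : Set (EuclideanSpace ℝ (Fin n)))) ∧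
      (∀ i, ∃ (d : ℕ) (pts : Fin (d + 1) → EuclideanSpace ℝ (Fin n)),
        AffineIndependent ℝ pts ∧ (∀ l, pts l ∈ V i) ∧
        Δ i = convexHull ℝ (Set.range pts)) ∧
      P = {x | ∃ y : Fin k → EuclideanSpace ℝ (Fin n),
        (∀ i, y i ∈ Δ i) ∧ x = x₀ + ∑ i, y i} := by
  change P = polyhedron u b at hP
  subst hP
  change IsSimplexProduct (polyhedron u b)
  obtain ⟨x₀, hx₀⟩ := hPint
  have hstrict : ∀ i, ⟪u i, x₀⟫ < b i := fun i =>
    inner_lt_of_mem_interior_polyhedron hx₀ (norm_ne_zero_iff.1 (by rw [hu i]; exact one_ne_zero))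
  have hne : (polyhedron u b).Nonempty := ⟨x₀, interior_subset hx₀⟩
  have hactive := polyhedron_eq_polyhedron_active hne
  rw [hactive] at hPc hne ⊢
  refine isSimplexProduct_polyhedron (fun i j hij => ?_)
    (fun d => eq_zero_of_forall_inner_nonpos_of_isBounded hPc.isBounded hne) fun i => hstrict i
  exact inner_nonpos_of_active (fun x hx i j hij hi hj => hacute i j hij ⟨x, ⟨hx, hi⟩, hj⟩)
    (hu i) (Subtype.coe_injective.ne hij) i.2 j.2
end

section
/- A convex spherical polyhedron P ⊆ S^n that is an intersection of finitely many hemispheres and all of whose dihedral angles are at most π/2 has at most n+1 facets. -/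
/-!
If `∑ gᵢ uᵢ = 0`, split `g` into positive and negative parts to get
`w = ∑ gᵢ⁺ uᵢ = ∑ gᵢ⁻ uᵢ`. The two coefficient families have disjoint supports and the `uᵢ`
are pairwise at an obtuse angle, so `⟪w, w⟫ ≤ 0` and `w = 0`. Pairing `w` with an interior
point `x`, which has positive inner product with every `uᵢ`, forces `gᵢ⁺ = gᵢ⁻ = 0`. Hence the
normals are linearly independent, and there are at most `n + 1` of them in `ℝⁿ⁺¹`.
-/

open RealInnerProductSpace

theorem posPart_mul_negPart_eq_zero {α : Type*} [Ring α] [LinearOrder α] [IsOrderedRing α]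
    (a : α) : a⁺ * a⁻ = 0 := by
  rcases le_total a 0 with h | h
  · rw [posPart_eq_zero.mpr h, zero_mul]
  · rw [negPart_eq_zero.mpr h, mul_zero]

section InnerProductSpace

variable {E ι : Type*} [NormedAddCommGroup E] [InnerProductSpace ℝ E]

theorem inner_sum_smul_sum_smul_nonpos {v : ι → E} (hv : Pairwise fun i j ↦ ⟪v i, v j⟫ ≤ 0)
    (s : Finset ι) {p q : ι → ℝ} (hp : ∀ i, 0 ≤ p i) (hq : ∀ i, 0 ≤ q i)
    (hpq : ∀ i, p i * q i = 0) :
    ⟪∑ i ∈ s, p i • v i, ∑ j ∈ s, q j • v j⟫ ≤ 0 := by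
  simp only [sum_inner, inner_sum, real_inner_smul_left, real_inner_smul_right]
  refine Finset.sum_nonpos fun i _ ↦ Finset.sum_nonpos fun j _ ↦ ?_
  rcases eq_or_ne i j with rfl | hij
  · rw [mul_left_comm, ← mul_assoc, hpq, zero_mul]
  · exact mul_nonpos_of_nonneg_of_nonpos (hq i)
      (mul_nonpos_of_nonneg_of_nonpos (hp j) (hv hij.symm))

theorem eq_zero_of_sum_smul_eq_zero_of_inner_pos {v : ι → E} {x : E}
    (hx : ∀ i, 0 < ⟪x, v i⟫) {s : Finset ι} {p : ι → ℝ} (hp : ∀ i, 0 ≤ p i)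
    (h : ∑ i ∈ s, p i • v i = 0) :
    ∀ i ∈ s, p i = 0 := by
  have hsum : ∑ i ∈ s, p i * ⟪x, v i⟫ = 0 := by
    simpa only [inner_sum, real_inner_smul_right, inner_zero_right] using congrArg (⟪x, ·⟫) h
  intro i hi
  have := (Finset.sum_eq_zero_iff_of_nonneg fun j _ ↦ mul_nonneg (hp j) (hx j).le).mp hsum i hi
  exact (mul_eq_zero.mp this).resolve_right (hx i).ne'

theorem linearIndependent_of_pairwise_inner_nonpos_of_inner_pos {v : ι → E}
    (hv : Pairwise fun i j ↦ ⟪v i, v j⟫ ≤ 0) {x : E} (hx : ∀ i, 0 < ⟪x, v i⟫) :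
    LinearIndependent ℝ v := by
  rw [linearIndependent_iff']
  intro s g hg i hi
  set w := ∑ j ∈ s, (g j)⁺ • v j
  have hw : ∑ j ∈ s, (g j)⁻ • v j = w := by
    have : ∑ j ∈ s, ((g j)⁺ - (g j)⁻) • v j = 0 := by
      simpa only [posPart_sub_negPart] using hg
    rw [eq_comm, ← sub_eq_zero, ← this, ← Finset.sum_sub_distrib]
    simp only [sub_smul]
  have hw0 : w = 0 := real_inner_self_nonpos.mp <| calc
    ⟪w, w⟫ = ⟪∑ j ∈ s, (g j)⁺ • v j, ∑ j ∈ s, (g j)⁻ • v j⟫ := by rw [hw]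
    _ ≤ 0 := inner_sum_smul_sum_smul_nonpos hv s (fun _ ↦ posPart_nonneg _)
      (fun _ ↦ negPart_nonneg _) fun _ ↦ posPart_mul_negPart_eq_zero _
  rw [← posPart_sub_negPart (g i),
    eq_zero_of_sum_smul_eq_zero_of_inner_pos hx (fun _ ↦ posPart_nonneg _) hw0 i hi,
    eq_zero_of_sum_smul_eq_zero_of_inner_pos hx (fun _ ↦ negPart_nonneg _) (hw.trans hw0) i hi,
    sub_zero]

end InnerProductSpace

theorem acute_spherical_polyhedron_facets_general {n m : ℕ}
    (u : Fin m → EuclideanSpace ℝ (Fin (n + 1)))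
    (hobt : ∀ i j, i ≠ j → ⟪u i, u j⟫ ≤ 0)
    (hint : ∃ x : EuclideanSpace ℝ (Fin (n + 1)), ‖x‖ = 1 ∧ ∀ i, 0 < ⟪x, u i⟫) :
    m ≤ n + 1 := by
  obtain ⟨x, -, hx⟩ := hint
  have hli := linearIndependent_of_pairwise_inner_nonpos_of_inner_pos (fun i j ↦ hobt i j) hx
  simpa using hli.fintype_card_le_finrank

/-- An acute convex spherical polyhedron `P = ∩ᵢ {x ∈ Sⁿ : ⟪x, uᵢ⟫ ≥ 0}` (the
outward normals `uᵢ` being distinct unit vectors with pairwise nonpositive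
inner products) whose interior is nonempty (there is a unit vector with
strictly positive inner product with every `uᵢ`) has at most `n+1` facets. -/
theorem acute_spherical_polyhedron_facets {n m : ℕ}
    (u : Fin m → EuclideanSpace ℝ (Fin (n + 1)))
    (hu : ∀ i, ‖u i‖ = 1) (hinj : Function.Injective u)
    (hobt : ∀ i j, i ≠ j → ⟪u i, u j⟫ ≤ 0)
    (hint : ∃ x : EuclideanSpace ℝ (Fin (n + 1)), ‖x‖ = 1 ∧ ∀ i, 0 < ⟪x, u i⟫) :
    m ≤ n + 1 :=
  acute_spherical_polyhedron_facets_general u hobt hint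
end

section
/- Let f : ℝ^n → ℝ^n be C¹ and suppose the differential satisfies ‖Df(x)‖_HS ≤ √n for all x and vol(f(Ω)) = vol(Ω) for a bounded open set Ω with f injective on Ω. Then |det Df(x)| = 1 and Df(x) is orthogonal for almost every x ∈ Ω. -/
open MeasureTheory RealInnerProductSpace
open scoped ENNReal Matrix

section Aux

variable {n : ℕ}

local notation "E" => EuclideanSpace ℝ (Fin n)

private lemma aux_prod_eigen (μ : Fin n → ℝ) (hnn : ∀ i, 0 ≤ μ i)
    (hs : ∑ i, μ i ≤ (n : ℝ)) :
    ∏ i, μ i ≤ 1 ∧ (∏ i, μ i = 1 → ∀ i, μ i = 1) := by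
  by_cases h0 : ∃ i, μ i = 0
  · obtain ⟨i, hi⟩ := h0
    have hp : ∏ i, μ i = 0 := Finset.prod_eq_zero (Finset.mem_univ i) hi
    rw [hp]
    exact ⟨zero_le_one, fun h => absurd h (by norm_num)⟩
  · push_neg at h0
    have hpos : ∀ i, 0 < μ i := fun i => (hnn i).lt_of_ne' (h0 i)
    have hlogle : ∀ i ∈ Finset.univ, Real.log (μ i) ≤ μ i - 1 :=
      fun i _ => Real.log_le_sub_one_of_pos (hpos i)
    have hsum1 : ∑ i, (μ i - 1) ≤ 0 := by
      rw [Finset.sum_sub_distrib]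
      simp only [Finset.sum_const, Finset.card_univ, Fintype.card_fin, nsmul_eq_mul, mul_one]
      linarith
    have hlogprod : Real.log (∏ i, μ i) = ∑ i, Real.log (μ i) :=
      Real.log_prod (fun i _ => h0 i)
    have hprodpos : 0 < ∏ i, μ i := Finset.prod_pos (fun i _ => hpos i)
    have hle : ∏ i, μ i ≤ 1 := by
      rw [← Real.log_nonpos_iff hprodpos.le, hlogprod]
      exact le_trans (Finset.sum_le_sum hlogle) hsum1
    refine ⟨hle, fun heq i => ?_⟩
    have hlog0 : ∑ i, Real.log (μ i) = 0 := by rw [← hlogprod, heq, Real.log_one]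
    have hsum_eq : ∑ i, Real.log (μ i) = ∑ i, (μ i - 1) := by
      have h1 : ∑ i, Real.log (μ i) ≤ ∑ i, (μ i - 1) := Finset.sum_le_sum hlogle
      linarith
    have := (Finset.sum_eq_sum_iff_of_le hlogle).1 hsum_eq i (Finset.mem_univ i)
    by_contra hne
    exact absurd this (ne_of_lt (Real.log_lt_sub_one_of_pos (hpos i) hne))

private lemma aux_trace (T : E →ₗ[ℝ] E) (b : OrthonormalBasis (Fin n) ℝ E) :
    LinearMap.trace ℝ E T = ∑ i, ⟪b i, T (b i)⟫ := by
  rw [LinearMap.trace_eq_matrix_trace ℝ b.toBasis, Matrix.trace]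
  congr 1
  ext i
  rw [Matrix.diag_apply, LinearMap.toMatrix_apply, b.coe_toBasis, b.coe_toBasis_repr_apply,
    b.repr_apply_apply]

/-- Key pointwise lemma: HS norm bound gives |det| ≤ 1, with equality forcing orthogonality. -/
private lemma aux_key (A : E →L[ℝ] E)
    (h : ∑ i, ‖A (EuclideanSpace.single i 1)‖ ^ 2 ≤ (n : ℝ)) :
    |LinearMap.det (A : E →ₗ[ℝ] E)| ≤ 1 ∧
    (|LinearMap.det (A : E →ₗ[ℝ] E)| = 1 →
      ∀ u v : E, ⟪A u, A v⟫ = ⟪u, v⟫) := by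
  classical
  set T : E →L[ℝ] E := ContinuousLinearMap.adjoint A ∘L A with hTdef
  have hinnerT : ∀ x y : E, ⟪x, T y⟫ = ⟪A x, A y⟫ := by
    intro x y
    rw [hTdef]
    simp only [ContinuousLinearMap.comp_apply]
    rw [ContinuousLinearMap.adjoint_inner_right]
  have hT : (T : E →ₗ[ℝ] E).IsSymmetric := by
    intro x y
    simp only [ContinuousLinearMap.coe_coe]
    have h1 : ⟪T x, y⟫ = ⟪A x, A y⟫ := by
      rw [real_inner_comm, hinnerT, real_inner_comm]
    rw [h1, hinnerT]
  have hn : Module.finrank ℝ E = n := finrank_euclideanSpace_fin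
  set b := hT.eigenvectorBasis hn with hbdef
  set μ := hT.eigenvalues hn with hμdef
  have hTb : ∀ i, T (b i) = μ i • b i := fun i => by
    have h2 := hT.apply_eigenvectorBasis hn i
    rw [RCLike.ofReal_real_eq_id] at h2
    exact h2
  have hμval : ∀ i, μ i = ⟪A (b i), A (b i)⟫ := by
    intro i
    rw [← hinnerT, hTb i, real_inner_smul_right, real_inner_self_eq_norm_sq, b.orthonormal.1 i]
    ring
  have hμnn : ∀ i, 0 ≤ μ i := fun i => by rw [hμval i]; exact real_inner_self_nonneg
  -- trace bound
  have htrace1 : LinearMap.trace ℝ E (T : E →ₗ[ℝ] E) = ∑ i, μ i := by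
    rw [aux_trace (T : E →ₗ[ℝ] E) b]
    refine Finset.sum_congr rfl fun i _ => ?_
    rw [ContinuousLinearMap.coe_coe, hTb i, real_inner_smul_right,
      real_inner_self_eq_norm_sq, b.orthonormal.1 i]
    ring
  have htrace2 : LinearMap.trace ℝ E (T : E →ₗ[ℝ] E)
      = ∑ i, ‖A (EuclideanSpace.single i 1)‖ ^ 2 := by
    rw [aux_trace (T : E →ₗ[ℝ] E) (EuclideanSpace.basisFun (Fin n) ℝ)]
    refine Finset.sum_congr rfl fun i _ => ?_
    rw [ContinuousLinearMap.coe_coe, EuclideanSpace.basisFun_apply, hinnerT,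
      real_inner_self_eq_norm_sq]
  have hsumμ : ∑ i, μ i ≤ (n : ℝ) := by rw [← htrace1, htrace2]; exact h
  -- determinant of T as product of eigenvalues
  have hmat : LinearMap.toMatrix b.toBasis b.toBasis (T : E →ₗ[ℝ] E) = Matrix.diagonal μ := by
    ext i j
    rw [LinearMap.toMatrix_apply, b.coe_toBasis, b.coe_toBasis_repr_apply,
      ContinuousLinearMap.coe_coe, hTb j, LinearIsometryEquiv.map_smul, b.repr_self]
    simp only [PiLp.smul_apply, smul_eq_mul, EuclideanSpace.single_apply, Matrix.diagonal_apply]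
    by_cases hij : i = j
    · subst hij; simp
    · simp [hij, Ne.symm hij]
  have hdetT : LinearMap.det (T : E →ₗ[ℝ] E) = ∏ i, μ i := by
    rw [← LinearMap.det_toMatrix b.toBasis, hmat, Matrix.det_diagonal]
  -- det adjoint = det
  have hdetadj : LinearMap.det ((ContinuousLinearMap.adjoint A : E →L[ℝ] E) : E →ₗ[ℝ] E)
      = LinearMap.det (A : E →ₗ[ℝ] E) := by
    have hmat2 : LinearMap.toMatrix b.toBasis b.toBasis
        ((ContinuousLinearMap.adjoint A : E →L[ℝ] E) : E →ₗ[ℝ] E)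
        = (LinearMap.toMatrix b.toBasis b.toBasis (A : E →ₗ[ℝ] E))ᵀ := by
      ext i j
      rw [Matrix.transpose_apply, LinearMap.toMatrix_apply, LinearMap.toMatrix_apply,
        b.coe_toBasis, b.coe_toBasis_repr_apply, b.coe_toBasis_repr_apply,
        b.repr_apply_apply, b.repr_apply_apply, ContinuousLinearMap.coe_coe,
        ContinuousLinearMap.coe_coe, ContinuousLinearMap.adjoint_inner_right,
        real_inner_comm]
    rw [← LinearMap.det_toMatrix b.toBasis, hmat2, Matrix.det_transpose,
      LinearMap.det_toMatrix]
  have hdetsq : (LinearMap.det (A : E →ₗ[ℝ] E)) ^ 2 = ∏ i, μ i := by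
    rw [← hdetT, hTdef, ContinuousLinearMap.toLinearMap_comp, LinearMap.det_comp, hdetadj]
    ring
  obtain ⟨hple, hpeq⟩ := aux_prod_eigen μ hμnn hsumμ
  constructor
  · -- |det A| ≤ 1
    nlinarith [abs_nonneg (LinearMap.det (A : E →ₗ[ℝ] E)), sq_abs (LinearMap.det (A : E →ₗ[ℝ] E))]
  · intro hdet1 u v
    have hprod1 : ∏ i, μ i = 1 := by
      rw [← hdetsq, ← sq_abs, hdet1]; norm_num
    have hμ1 := hpeq hprod1
    have hTid : ∀ x : E, T x = x := by
      have : (T : E →ₗ[ℝ] E) = LinearMap.id := by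
        apply b.toBasis.ext
        intro i
        rw [b.coe_toBasis, ContinuousLinearMap.coe_coe, hTb i, hμ1 i, one_smul,
          LinearMap.id_apply]
      intro x
      have := LinearMap.congr_fun this x
      simpa using this
    rw [← hinnerT, hTid]

end Aux

/-- Infinitesimal volume rigidity: if `f : ℝ^n → ℝ^n` is C¹ with
`‖Df(x)‖_HS ≤ √n` everywhere (i.e. `∑ᵢ ‖Df(x) eᵢ‖² ≤ n`), `Ω` is a bounded
open set on which `f` is injective, and `vol(f(Ω)) = vol(Ω)`, then for almost
every `x ∈ Ω` the differential `Df(x)` has `|det| = 1` and is orthogonal. -/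
theorem volume_rigidity_infinitesimal {n : ℕ}
    (f : EuclideanSpace ℝ (Fin n) → EuclideanSpace ℝ (Fin n))
    (hf : ContDiff ℝ 1 f)
    (hHS : ∀ x, ∑ i, ‖fderiv ℝ f x (EuclideanSpace.single i 1)‖ ^ 2 ≤ (n : ℝ))
    (Ω : Set (EuclideanSpace ℝ (Fin n)))
    (hΩo : IsOpen Ω) (hΩb : Bornology.IsBounded Ω)
    (hinj : Set.InjOn f Ω)
    (hvol : volume (f '' Ω) = volume Ω) :
    ∀ᵐ x ∂volume, x ∈ Ω →
      |LinearMap.det ((fderiv ℝ f x) : EuclideanSpace ℝ (Fin n) →ₗ[ℝ]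
        EuclideanSpace ℝ (Fin n))| = 1 ∧
      ∀ u v : EuclideanSpace ℝ (Fin n),
        ⟪fderiv ℝ f x u, fderiv ℝ f x v⟫ = ⟪u, v⟫ := by
  have hkey := fun x => aux_key (fderiv ℝ f x) (hHS x)
  set g : EuclideanSpace ℝ (Fin n) → ℝ≥0∞ :=
    fun x => ENNReal.ofReal |(fderiv ℝ f x).det| with hgdef
  have hgle : ∀ x, g x ≤ 1 := by
    intro x
    rw [hgdef]
    simp only
    rw [← ENNReal.ofReal_one]
    exact ENNReal.ofReal_le_ofReal ((hkey x).1)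
  have hgmeas : Measurable g := by
    apply ENNReal.measurable_ofReal.comp
    exact (continuous_abs.comp
      (ContinuousLinearMap.continuous_det.comp (hf.continuous_fderiv one_ne_zero))).measurable
  have hdiff : ∀ x ∈ Ω, HasFDerivWithinAt f (fderiv ℝ f x) Ω x := fun x _ =>
    ((hf.differentiable one_ne_zero) x).hasFDerivAt.hasFDerivWithinAt
  have hchg := lintegral_abs_det_fderiv_eq_addHaar_image volume hΩo.measurableSet hdiff hinj
  have hint : ∫⁻ x in Ω, g x ∂volume = volume Ω := by
    rw [hgdef]; rw [hchg, hvol]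
  have hΩfin : volume Ω ≠ ⊤ := hΩb.measure_lt_top.ne
  have hintfin : ∫⁻ x in Ω, g x ∂volume ≠ ⊤ := by rw [hint]; exact hΩfin
  have hsub : ∫⁻ x in Ω, (1 - g x) ∂volume = 0 := by
    rw [lintegral_sub hgmeas hintfin (Filter.Eventually.of_forall hgle)]
    rw [hint, lintegral_one, Measure.restrict_apply_univ, tsub_self]
  have hae : ∀ᵐ x ∂(volume.restrict Ω), (1 : ℝ≥0∞) - g x = 0 := by
    have h0 := (lintegral_eq_zero_iff (measurable_const.sub hgmeas)).1 hsub
    filter_upwards [h0] with x hx using hx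
  have hae2 : ∀ᵐ x ∂volume, x ∈ Ω → (1 : ℝ≥0∞) - g x = 0 :=
    (ae_restrict_iff' hΩo.measurableSet).1 hae
  filter_upwards [hae2] with x hx hxΩ
  have hge : (1 : ℝ≥0∞) ≤ g x := tsub_eq_zero_iff_le.1 (hx hxΩ)
  have h1 : (1 : ℝ) ≤ |(fderiv ℝ f x).det| := by
    rw [hgdef] at hge
    exact ENNReal.one_le_ofReal.1 hge
  have hdet1 : |LinearMap.det ((fderiv ℝ f x) : EuclideanSpace ℝ (Fin n) →ₗ[ℝ]
      EuclideanSpace ℝ (Fin n))| = 1 := le_antisymm ((hkey x).1) h1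
  exact ⟨hdet1, (hkey x).2 hdet1⟩
end
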